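/- arXiv:1804.10256 — 7 statements merged into one kernel-verified Lean document; each statement's English description precedes it below -/
import Mathlib

section
/- Fix indices 1 ≤ i < j ≤ K and an integer L with i ≤ L < j. Let D : [0,1]^K → {0,1}^K be a symmetric measurable decision rule, let A_ij = {u : u_i < u_j, D_i(u) = 0, D_j(u) = 1}, let σ_ij be the permutation interchanging coordinates i and j, let A_ji = σ_ij(A_ij), and let E be the rule equal to D except that for u ∈ A_ij ∪ A_ji the values of coordinates i and j of D(u) are interchanged. Let r : {0,1}^K → [0,∞) be arrangement increasing with respect to h_L, meaning: whenever d, d' ∈ {0,1}^K are permutations of one another and d_k ≥ d'_k for all k ≤ L (hence d_k ≤ d'_k for all k > L), then r(d) ≥ r(d'). If the density f_{h_L} satisfies the arrangement-decreasing property and is h-exchangeable, then ∫_{[0,1]^K} r(E(u)) f_{h_L}(u) du ≥ ∫_{[0,1]^K} r(D(u)) f_{h_L}(u) du. -/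
open MeasureTheory Finset

noncomputable section

/-- The unit cube `[0,1]^K`. -/
def unitCube (K : ℕ) : Set (Fin K → ℝ) := Set.Icc 0 1

/-- Symmetry of a decision rule: `σ(D(u)) = D(σ(u))` for every permutation `σ`. -/
def IsSymmRule (K : ℕ) (D : (Fin K → ℝ) → Fin K → ℝ) : Prop :=
  ∀ (σ : Equiv.Perm (Fin K)) (u : Fin K → ℝ), D (u ∘ σ) = (D u) ∘ σ

/-- h-exchangeability: `f_h(u) = f_{σ(h)}(σ(u))`. -/
def Exchangeable (K : ℕ) (f : (Fin K → Bool) → (Fin K → ℝ) → ℝ) : Prop :=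
  ∀ (σ : Equiv.Perm (Fin K)) (h : Fin K → Bool) (u : Fin K → ℝ),
    f h u = f (h ∘ σ) (u ∘ σ)

set_option maxHeartbeats 1000000 in
/-- The coordinate-swapping improvement step: swapping the decisions on
the sets `A_ij ∪ A_ji` does not decrease the integral of an arrangement-increasing
function `r` of the decision vector against the arrangement-decreasing, exchangeable
density `f_{h_L}`. -/
theorem swap_improves_arrangement_increasing_integral
    (K : ℕ) (f : (Fin K → Bool) → (Fin K → ℝ) → ℝ)
    (hfMeas : ∀ h, Measurable (f h)) (hfNonneg : ∀ h u, 0 ≤ f h u)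
    (hfInt : ∀ h, IntegrableOn (f h) (unitCube K))
    (hExch : Exchangeable K f)
    (i j : Fin K) (hij : i < j) (L : ℕ) (hiL : (i : ℕ) < L) (hLj : L ≤ (j : ℕ))
    -- the configuration h_L (first L nulls false) and arrangement-decreasing property of f_{h_L}
    (hArrDec : ∀ (σ : Equiv.Perm (Fin K)) (u : Fin K → ℝ),
      (∀ k : Fin K, (k : ℕ) < L → u k ≤ (u ∘ σ) k) →
        f (fun k => decide ((k : ℕ) < L)) (u ∘ σ) ≤ f (fun k => decide ((k : ℕ) < L)) u)
    (D : (Fin K → ℝ) → Fin K → ℝ)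
    (hDMeas : Measurable D) (hD01 : ∀ u k, D u k = 0 ∨ D u k = 1)
    (hDSymm : IsSymmRule K D)
    -- E equals D, except that on `A_ij ∪ A_ji` the coordinates i and j of D(u) are swapped
    (E : (Fin K → ℝ) → Fin K → ℝ)
    (hE : ∀ u k, E u k =
      if (u i < u j ∧ D u i = 0 ∧ D u j = 1) ∨
         ((u ∘ Equiv.swap i j) i < (u ∘ Equiv.swap i j) j ∧
           D (u ∘ Equiv.swap i j) i = 0 ∧ D (u ∘ Equiv.swap i j) j = 1)
      then D u (Equiv.swap i j k) else D u k)
    -- r : {0,1}^K → [0,∞) is arrangement increasing with respect to h_L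
    (r : (Fin K → ℝ) → ℝ)
    (hrMeas : Measurable r) (hrNonneg : ∀ d, 0 ≤ r d)
    (hrArrInc : ∀ d d' : Fin K → ℝ, (∀ k, d k = 0 ∨ d k = 1) → (∀ k, d' k = 0 ∨ d' k = 1) →
      (∃ σ : Equiv.Perm (Fin K), d = d' ∘ σ) →
      (∀ k : Fin K, (k : ℕ) < L → d' k ≤ d k) → r d' ≤ r d) :
    (∫ u in unitCube K, r (D u) * f (fun k => decide ((k : ℕ) < L)) u) ≤
      ∫ u in unitCube K, r (E u) * f (fun k => decide ((k : ℕ) < L)) u := by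
  classical
  set fL : (Fin K → ℝ) → ℝ := f (fun k => decide ((k : ℕ) < L)) with hfLdef
  set σ : Equiv.Perm (Fin K) := Equiv.swap i j with hσ
  have hine : i ≠ j := ne_of_lt hij
  set P : (Fin K → ℝ) → Prop := fun u => u i < u j ∧ D u i = 0 ∧ D u j = 1 with hP
  set m : (Fin K → ℝ) → (Fin K → ℝ) := fun u => u ∘ σ with hm
  -- E description
  have hE' : ∀ u, E u = if P u ∨ P (u ∘ σ) then D u ∘ σ else D u := by
    intro u
    by_cases hc : P u ∨ P (u ∘ σ)
    · rw [if_pos hc]; funext k; rw [hE u k, if_pos]; · rfl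
      · exact hc
    · rw [if_neg hc]; funext k; rw [hE u k, if_neg]; exact hc
  -- basic measurability
  have hDk : ∀ k : Fin K, Measurable fun u => D u k :=
    fun k => (measurable_pi_apply k).comp hDMeas
  have hPMeas : MeasurableSet {u : Fin K → ℝ | P u} := by
    have : {u : Fin K → ℝ | P u} =
        ({u : Fin K → ℝ | u i < u j} ∩ ((fun u => D u i) ⁻¹' {0})) ∩
          ((fun u => D u j) ⁻¹' {1}) := by
      ext u; simp [hP, and_assoc]
    rw [this]
    exact ((measurableSet_lt (measurable_pi_apply i) (measurable_pi_apply j)).inter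
      ((hDk i) (measurableSet_singleton 0))).inter ((hDk j) (measurableSet_singleton 1))
  have hmMeas : Measurable m :=
    measurable_pi_lambda _ fun k => measurable_pi_apply (σ k)
  -- m as a measurable equivalence
  have hmeq : ⇑(MeasurableEquiv.piCongrLeft (fun _ : Fin K => ℝ) σ.symm) = m := by
    funext u
    funext k
    have h1 := Equiv.piCongrLeft_apply_apply (P := fun _ : Fin K => ℝ) σ.symm u (σ k)
    have h2 : σ.symm (σ k) = k := Equiv.symm_apply_apply σ k
    rw [MeasurableEquiv.coe_piCongrLeft]
    rw [h2] at h1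
    exact h1
  have hmp : MeasurePreserving m (volume : Measure (Fin K → ℝ)) volume := by
    have := MeasureTheory.volume_measurePreserving_piCongrLeft (fun _ : Fin K => ℝ) σ.symm
    rwa [hmeq] at this
  have hemb : MeasurableEmbedding m := by
    rw [← hmeq]
    exact (MeasurableEquiv.piCongrLeft (fun _ : Fin K => ℝ) σ.symm).measurableEmbedding
  have hmm : ∀ u, m (m u) = u := by
    intro u; funext k
    show u (σ (σ k)) = u k
    rw [hσ, Equiv.swap_apply_self]
  -- cube invariance
  have hcubeMeas : MeasurableSet (unitCube K) := measurableSet_Icc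
  have hmemcube : ∀ u : Fin K → ℝ, u ∈ unitCube K ↔ ∀ k, 0 ≤ u k ∧ u k ≤ 1 := by
    intro u
    constructor
    · rintro ⟨h0, h1⟩ k; exact ⟨h0 k, h1 k⟩
    · intro h; exact ⟨fun k => (h k).1, fun k => (h k).2⟩
  have hcube : ∀ u : Fin K → ℝ, m u ∈ unitCube K ↔ u ∈ unitCube K := by
    intro u
    rw [hmemcube, hmemcube]
    constructor
    · intro h k
      have := h (σ.symm k)
      simpa [m, Equiv.apply_symm_apply] using this
    · intro h k; exact h (σ k)
  -- the sets
  set T : Set (Fin K → ℝ) := unitCube K ∩ {u | P u} with hT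
  set T' : Set (Fin K → ℝ) := unitCube K ∩ {u | P (u ∘ σ)} with hT'
  have hT'pre : T' = m ⁻¹' T := by
    ext u
    simp only [hT, hT', Set.mem_inter_iff, Set.mem_preimage, Set.mem_setOf_eq]
    constructor
    · rintro ⟨hu, hp⟩; exact ⟨(hcube u).mpr hu, hp⟩
    · rintro ⟨hu, hp⟩; exact ⟨(hcube u).mp hu, hp⟩
  have hTpre : T = m ⁻¹' T' := by
    rw [hT'pre, ← Set.preimage_comp]
    have : m ∘ m = id := funext hmm
    rw [this, Set.preimage_id]
  have hTmeas : MeasurableSet T := hcubeMeas.inter hPMeas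
  have hT'meas : MeasurableSet T' := hcubeMeas.inter (hmMeas hPMeas)
  have hdisj : Disjoint T T' := by
    rw [Set.disjoint_left]
    rintro u ⟨-, hp⟩ ⟨-, hp'⟩
    have h1 : u i < u j := hp.1
    have h2 : (u ∘ σ) i < (u ∘ σ) j := hp'.1
    rw [show (u ∘ σ) i = u j by simp [hσ, Equiv.swap_apply_left],
      show (u ∘ σ) j = u i by simp [hσ, Equiv.swap_apply_right]] at h2
    exact absurd h2 (not_lt.mpr h1.le)
  -- E is measurable and 0/1-valued
  set S : Set (Fin K → ℝ) := {u | P u ∨ P (u ∘ σ)} with hS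
  have hSmeas : MeasurableSet S := hPMeas.union (hmMeas hPMeas)
  have hDσMeas : Measurable fun u => D u ∘ σ :=
    measurable_pi_lambda _ fun k => (measurable_pi_apply (σ k)).comp hDMeas
  have hEMeas : Measurable E := by
    have : E = S.piecewise (fun u => D u ∘ σ) D := by
      funext u
      rw [hE' u]
      by_cases hc : P u ∨ P (u ∘ ⇑σ)
      · rw [if_pos hc, Set.piecewise_eq_of_mem _ _ _ (by exact hc)]
      · rw [if_neg hc, Set.piecewise_eq_of_notMem _ _ _ (by exact hc)]
    rw [this]
    exact Measurable.piecewise hSmeas hDσMeas hDMeas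
  have hE01 : ∀ u k, E u k = 0 ∨ E u k = 1 := by
    intro u k
    rw [hE' u]
    by_cases hc : P u ∨ P (u ∘ σ)
    · rw [if_pos hc]; exact hD01 u (σ k)
    · rw [if_neg hc]; exact hD01 u k
  -- boundedness and integrability
  have hC : ∃ C : ℝ, 0 ≤ C ∧ ∀ (v : Fin K → ℝ), (∀ k, v k = 0 ∨ v k = 1) → r v ≤ C := by
    set val : (Fin K → Bool) → (Fin K → ℝ) := fun b k => if b k then 1 else 0 with hval
    refine ⟨Finset.univ.sup' Finset.univ_nonempty (fun b => r (val b)), ?_, ?_⟩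
    · exact le_trans (hrNonneg (val fun _ => false))
        (Finset.le_sup' (fun b => r (val b)) (Finset.mem_univ _))
    · intro v hv
      have : v = val fun k => decide (v k = 1) := by
        funext k
        rcases hv k with h0 | h1
        · simp [hval, h0]
        · simp [hval, h1]
      rw [this]
      exact Finset.le_sup' (fun b => r (val b)) (Finset.mem_univ _)
  obtain ⟨C, hC0, hCle⟩ := hC
  have hbound : ∀ (G : (Fin K → ℝ) → Fin K → ℝ), (∀ u k, G u k = 0 ∨ G u k = 1) →
      Measurable G → IntegrableOn (fun u => r (G u) * fL u) (unitCube K) := by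
    intro G hG01 hGMeas
    have hfLInt : IntegrableOn fL (unitCube K) := by rw [hfLdef]; exact hfInt _
    refine Integrable.mono (hfLInt.const_mul C)
      ((hrMeas.comp hGMeas).mul (hfMeas _)).aestronglyMeasurable
      (Filter.Eventually.of_forall fun u => ?_)
    have hfLnn : ∀ v, 0 ≤ fL v := by rw [hfLdef]; exact fun v => hfNonneg _ v
    simp only [Real.norm_eq_abs, abs_mul, abs_of_nonneg (hrNonneg _),
      abs_of_nonneg (hfLnn _), abs_of_nonneg hC0]
    exact mul_le_mul_of_nonneg_right (hCle _ (hG01 u)) (hfLnn _)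
  have ID : IntegrableOn (fun u => r (D u) * fL u) (unitCube K) := hbound D hD01 hDMeas
  have IE : IntegrableOn (fun u => r (E u) * fL u) (unitCube K) := hbound E hE01 hEMeas
  -- reduce to nonnegativity of the difference
  rw [← sub_nonneg, ← MeasureTheory.integral_sub IE ID]
  set g : (Fin K → ℝ) → ℝ := fun u => r (E u) * fL u - r (D u) * fL u with hg
  have hgInt : IntegrableOn g (unitCube K) := IE.sub ID
  -- g vanishes off S
  have hgzero : ∀ u, u ∉ S → g u = 0 := by
    intro u hu
    have hu' : ¬(P u ∨ P (u ∘ ⇑σ)) := hu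
    have : E u = D u := by rw [hE' u, if_neg hu']
    simp [hg, this]
  -- split the integral
  have hsplit : ∫ u in unitCube K, g u = (∫ u in T, g u) + ∫ u in T', g u := by
    have h1 : (∫ u in unitCube K ∩ S, g u) + ∫ u in unitCube K \ S, g u
        = ∫ u in unitCube K, g u := integral_inter_add_diff hSmeas hgInt
    have h2 : ∫ u in unitCube K \ S, g u = 0 := by
      rw [setIntegral_congr_fun (hcubeMeas.diff hSmeas)
        (fun u hu => hgzero u hu.2)]
      exact integral_zero _ _
    have h3 : unitCube K ∩ S = T ∪ T' := by
      rw [hT, hT', hS]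
      exact Set.inter_union_distrib_left _ _ _
    rw [← h1, h2, add_zero, h3,
      setIntegral_union hdisj hT'meas (hgInt.mono_set ?_) (hgInt.mono_set ?_)]
    · rw [hT]; exact Set.inter_subset_left
    · rw [hT']; exact Set.inter_subset_left
  -- transfer the integral over T' to T
  have hgmInt : IntegrableOn (fun u => g (m u)) T := by
    have h1 : IntegrableOn g T' := by
      refine hgInt.mono_set ?_
      rw [hT']; exact Set.inter_subset_left
    rw [hTpre]
    exact (hmp.integrableOn_comp_preimage hemb).mpr h1
  have htrans : ∫ u in T', g u = ∫ u in T, g (m u) := by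
    have h := hmp.setIntegral_preimage_emb hemb (fun y => g (m y)) T
    rw [hT'pre]
    calc ∫ x in m ⁻¹' T, g x = ∫ x in m ⁻¹' T, g (m (m x)) := by simp only [hmm]
      _ = ∫ y in T, g (m y) := h
  have hgTInt : IntegrableOn g T := by
    refine hgInt.mono_set ?_
    rw [hT]; exact Set.inter_subset_left
  rw [hsplit, htrans, ← MeasureTheory.integral_add hgTInt hgmInt]
  -- pointwise nonnegativity on T
  refine setIntegral_nonneg hTmeas fun u hu => ?_
  obtain ⟨hucube, hPu⟩ := hu
  have hPu : P u := hPu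
  have hσi : σ i = j := Equiv.swap_apply_left i j
  have hσj : σ j = i := Equiv.swap_apply_right i j
  -- compute E u and E (m u), D (m u)
  have hEu : E u = D u ∘ σ := by rw [hE' u, if_pos (Or.inl hPu)]
  have hDmu : D (m u) = D u ∘ σ := hDSymm σ u
  have hEmu : E (m u) = D u := by
    rw [hE' (m u), if_pos (Or.inr (by rw [show m u ∘ σ = u from hmm u]; exact hPu))]
    rw [hDmu]
    funext k
    show D u (σ (σ k)) = D u k
    rw [hσ, Equiv.swap_apply_self]
  -- the two key inequalities
  have hr_le : r (D u) ≤ r (D u ∘ σ) := by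
    refine hrArrInc (D u ∘ σ) (D u) (fun k => hD01 u (σ k)) (hD01 u) ⟨σ, rfl⟩ ?_
    intro k hk
    by_cases hki : k = i
    · subst hki
      show D u k ≤ D u (σ k)
      rw [show σ k = j from hσi, hPu.2.1, hPu.2.2]
      norm_num
    · have hkj : k ≠ j := by
        intro hkj; subst hkj
        exact absurd hk (not_lt.mpr hLj)
      show D u k ≤ D u (σ k)
      rw [show σ k = k from Equiv.swap_apply_of_ne_of_ne hki hkj]
  have hf_le : fL (u ∘ σ) ≤ fL u := by
    refine hArrDec σ u ?_
    intro k hk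
    by_cases hki : k = i
    · subst hki
      show u k ≤ u (σ k)
      rw [show σ k = j from hσi]
      exact hPu.1.le
    · have hkj : k ≠ j := by
        intro hkj; subst hkj
        exact absurd hk (not_lt.mpr hLj)
      show u k ≤ u (σ k)
      rw [show σ k = k from Equiv.swap_apply_of_ne_of_ne hki hkj]
  -- conclude
  have : g u + g (m u) = (r (D u ∘ σ) - r (D u)) * (fL u - fL (u ∘ σ)) := by
    rw [hg]
    show r (E u) * fL u - r (D u) * fL u +
      (r (E (m u)) * fL (m u) - r (D (m u)) * fL (m u)) = _
    rw [hEu, hEmu, hDmu]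
    show r (D u ∘ σ) * fL u - r (D u) * fL u +
      (r (D u) * fL (u ∘ σ) - r (D u ∘ σ) * fL (u ∘ σ)) = _
    ring
  rw [show g u + g (m u) = (r (D u ∘ σ) - r (D u)) * (fL u - fL (u ∘ σ)) from this]
  exact mul_nonneg (sub_nonneg.mpr hr_le) (sub_nonneg.mpr hf_le)

end
end

section
/- Fix indices 1 ≤ i < j ≤ K and an integer L with i ≤ L < j. Let D : [0,1]^K → {0,1}^K be a symmetric measurable decision rule, let A_ij = {u : u_i < u_j, D_i(u) = 0, D_j(u) = 1}, let σ_ij be the permutation interchanging coordinates i and j, let A_ji = σ_ij(A_ij), and let E be the rule equal to D except that for u ∈ A_ij ∪ A_ji the values of coordinates i and j of D(u) are interchanged. Let s : {0,1}^K → [0,∞) be arrangement decreasing with respect to h_L, meaning: whenever d, d' ∈ {0,1}^K are permutations of one another and d_k ≥ d'_k for all k ≤ L (hence d_k ≤ d'_k for all k > L), then s(d) ≤ s(d'). If the density f_{h_L} satisfies the arrangement-decreasing property and is h-exchangeable, then ∫_{[0,1]^K} s(E(u)) f_{h_L}(u) du ≤ ∫_{[0,1]^K} s(D(u)) f_{h_L}(u)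 du. -/
open MeasureTheory Finset

noncomputable section

/-- Composing with a coordinate permutation is volume preserving. -/
lemma permComp_measurePreserving (K : ℕ) (τ : Equiv.Perm (Fin K)) :
    MeasurePreserving (fun u : Fin K → ℝ => u ∘ τ) volume volume := by
  have h0 := MeasureTheory.volume_preserving_arrowCongr' (β₁ := ℝ) τ.symm (MeasurableEquiv.refl ℝ)
    (MeasurePreserving.id _)
  have hc : ⇑(MeasurableEquiv.arrowCongr' τ.symm (MeasurableEquiv.refl ℝ)) =
      fun u : Fin K → ℝ => u ∘ τ := by
    funext u
    simp [MeasurableEquiv.arrowCongr', Equiv.arrowCongr', Equiv.arrowCongr]; rfl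
  rwa [hc] at h0

lemma permComp_measurableEmbedding (K : ℕ) (τ : Equiv.Perm (Fin K)) :
    MeasurableEmbedding (fun u : Fin K → ℝ => u ∘ τ) := by
  have hc : ⇑(MeasurableEquiv.arrowCongr' τ.symm (MeasurableEquiv.refl ℝ)) =
      fun u : Fin K → ℝ => u ∘ τ := by
    funext u
    simp [MeasurableEquiv.arrowCongr', Equiv.arrowCongr', Equiv.arrowCongr]; rfl
  rw [← hc]
  exact (MeasurableEquiv.arrowCongr' τ.symm (MeasurableEquiv.refl ℝ)).measurableEmbedding

lemma permComp_preimage_unitCube (K : ℕ) (τ : Equiv.Perm (Fin K)) :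
    (fun u : Fin K → ℝ => u ∘ τ) ⁻¹' unitCube K = unitCube K := by
  ext u
  simp only [unitCube, Set.mem_preimage, Set.mem_Icc, Pi.le_def]
  constructor
  · rintro ⟨h1, h2⟩
    refine ⟨fun k => ?_, fun k => ?_⟩
    · have := h1 (τ.symm k); simpa using this
    · have := h2 (τ.symm k); simpa using this
  · rintro ⟨h1, h2⟩
    exact ⟨fun k => h1 (τ k), fun k => h2 (τ k)⟩

/-- The coordinate-swapping improvement step: swapping the decisions on
the sets `A_ij ∪ A_ji` does not increase the integral of an arrangement-decreasing
function `s` of the decision vector against the arrangement-decreasing, exchangeable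
density `f_{h_L}`. -/
theorem swap_improves_arrangement_decreasing_integral
    (K : ℕ) (f : (Fin K → Bool) → (Fin K → ℝ) → ℝ)
    (hfMeas : ∀ h, Measurable (f h)) (hfNonneg : ∀ h u, 0 ≤ f h u)
    (hfInt : ∀ h, IntegrableOn (f h) (unitCube K))
    (hExch : Exchangeable K f)
    (i j : Fin K) (hij : i < j) (L : ℕ) (hiL : (i : ℕ) < L) (hLj : L ≤ (j : ℕ))
    -- the configuration h_L (first L nulls false) and arrangement-decreasing property of f_{h_L}
    (hArrDec : ∀ (σ : Equiv.Perm (Fin K)) (u : Fin K → ℝ),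
      (∀ k : Fin K, (k : ℕ) < L → u k ≤ (u ∘ σ) k) →
        f (fun k => decide ((k : ℕ) < L)) (u ∘ σ) ≤ f (fun k => decide ((k : ℕ) < L)) u)
    (D : (Fin K → ℝ) → Fin K → ℝ)
    (hDMeas : Measurable D) (hD01 : ∀ u k, D u k = 0 ∨ D u k = 1)
    (hDSymm : IsSymmRule K D)
    -- E equals D, except that on `A_ij ∪ A_ji` the coordinates i and j of D(u) are swapped
    (E : (Fin K → ℝ) → Fin K → ℝ)
    (hE : ∀ u k, E u k =
      if (u i < u j ∧ D u i = 0 ∧ D u j = 1) ∨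
         ((u ∘ Equiv.swap i j) i < (u ∘ Equiv.swap i j) j ∧
           D (u ∘ Equiv.swap i j) i = 0 ∧ D (u ∘ Equiv.swap i j) j = 1)
      then D u (Equiv.swap i j k) else D u k)
    -- s : {0,1}^K → [0,∞) is arrangement decreasing with respect to h_L
    (s : (Fin K → ℝ) → ℝ)
    (hsMeas : Measurable s) (hsNonneg : ∀ d, 0 ≤ s d)
    (hsArrDec : ∀ d d' : Fin K → ℝ, (∀ k, d k = 0 ∨ d k = 1) → (∀ k, d' k = 0 ∨ d' k = 1) →
      (∃ σ : Equiv.Perm (Fin K), d = d' ∘ σ) →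
      (∀ k : Fin K, (k : ℕ) < L → d' k ≤ d k) → s d ≤ s d') :
    (∫ u in unitCube K, s (E u) * f (fun k => decide ((k : ℕ) < L)) u) ≤
      ∫ u in unitCube K, s (D u) * f (fun k => decide ((k : ℕ) < L)) u := by
  classical
  set h : Fin K → Bool := fun k => decide ((k : ℕ) < L) with hh
  set τ : Equiv.Perm (Fin K) := Equiv.swap i j with hτdef
  have hne : i ≠ j := ne_of_lt hij
  have hτi : τ i = j := Equiv.swap_apply_left i j
  have hτj : τ j = i := Equiv.swap_apply_right i j
  have hττk : ∀ k, τ (τ k) = k := fun k => Equiv.swap_apply_self i j k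
  have hττ : ∀ u : Fin K → ℝ, (u ∘ τ) ∘ τ = u := by
    intro u; funext k; simp [Function.comp, hττk]
  have hjL : ¬ ((j : ℕ) < L) := not_lt.mpr hLj
  -- P is the defining condition of A_ij
  set P : (Fin K → ℝ) → Prop := fun u => u i < u j ∧ D u i = 0 ∧ D u j = 1 with hP
  have hDτ : ∀ u : Fin K → ℝ, D (u ∘ τ) = D u ∘ τ := fun u => hDSymm τ u
  -- the values of E
  have hEpos : ∀ u : Fin K → ℝ, (P u ∨ P (u ∘ τ)) → E u = D u ∘ τ := by
    intro u hc; funext k; rw [hE u k, if_pos hc]; rfl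
  have hEneg : ∀ u : Fin K → ℝ, ¬(P u ∨ P (u ∘ τ)) → E u = D u := by
    intro u hc; funext k; rw [hE u k, if_neg hc]
  have hE01 : ∀ u k, E u k = 0 ∨ E u k = 1 := by
    intro u k; rw [hE u k]; split
    · exact hD01 u _
    · exact hD01 u k
  -- key pointwise inequality
  have key : ∀ u : Fin K → ℝ,
      s (E u) * f h u + s (E (u ∘ τ)) * f h (u ∘ τ) ≤
      s (D u) * f h u + s (D (u ∘ τ)) * f h (u ∘ τ) := by
    intro u
    by_cases hc : P u ∨ P (u ∘ τ)
    · have hc' : P (u ∘ τ) ∨ P ((u ∘ τ) ∘ τ) := by rw [hττ]; tauto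
      have hEu : E u = D u ∘ τ := hEpos u hc
      have hEuτ : E (u ∘ τ) = D u := by
        rw [hEpos (u ∘ τ) hc', hDτ, hττ]
      rw [hEu, hEuτ, hDτ]
      -- goal: s (D u ∘ τ) * f h u + s (D u) * f h (u∘τ) ≤ s (D u) * f h u + s (D u ∘ τ) * f h (u∘τ)
      rcases hc with hPu | hPuτ
      · have hs1 : s (D u ∘ τ) ≤ s (D u) := by
          apply hsArrDec (D u ∘ τ) (D u) (fun k => hD01 u (τ k)) (hD01 u) ⟨τ, rfl⟩
          intro k hk
          by_cases hki : k = i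
          · subst hki
            simp only [Function.comp_apply, hτi, hPu.2.1, hPu.2.2]
            norm_num
          · have hkj : k ≠ j := by rintro rfl; exact hjL hk
            simp [Function.comp_apply, Equiv.swap_apply_of_ne_of_ne hki hkj, hτdef]
        have hf1 : f h (u ∘ τ) ≤ f h u := by
          apply hArrDec τ u
          intro k hk
          by_cases hki : k = i
          · subst hki
            simp only [Function.comp_apply, hτi]
            exact le_of_lt hPu.1
          · have hkj : k ≠ j := by rintro rfl; exact hjL hk
            simp [Function.comp_apply, Equiv.swap_apply_of_ne_of_ne hki hkj, hτdef]
        nlinarith [mul_nonneg (sub_nonneg.2 hs1) (sub_nonneg.2 hf1)]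
      · -- P (u ∘ τ) : u j < u i, D u j = 0, D u i = 1
        have h1 : u j < u i := by
          have := hPuτ.1; simpa [Function.comp_apply, hτi, hτj] using this
        have h2 : D u j = 0 := by
          have := hPuτ.2.1; rwa [hDτ, Function.comp_apply, hτi] at this
        have h3 : D u i = 1 := by
          have := hPuτ.2.2; rwa [hDτ, Function.comp_apply, hτj] at this
        have hs1 : s (D u) ≤ s (D u ∘ τ) := by
          apply hsArrDec (D u) (D u ∘ τ) (hD01 u) (fun k => hD01 u (τ k)) ⟨τ, (hττ (D u)).symm⟩
          intro k hk
          by_cases hki : k = i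
          · subst hki
            simp only [Function.comp_apply, hτi, h2, h3]
            norm_num
          · have hkj : k ≠ j := by rintro rfl; exact hjL hk
            simp [Function.comp_apply, Equiv.swap_apply_of_ne_of_ne hki hkj, hτdef]
        have hf1 : f h u ≤ f h (u ∘ τ) := by
          have := hArrDec τ (u ∘ τ) ?_
          · rwa [hττ] at this
          · intro k hk
            rw [hττ u]
            by_cases hki : k = i
            · rw [hki]
              simp only [Function.comp_apply, hτi]
              exact le_of_lt h1
            · have hkj : k ≠ j := by rintro rfl; exact hjL hk
              simp [Function.comp_apply, Equiv.swap_apply_of_ne_of_ne hki hkj, hτdef]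
        nlinarith [mul_nonneg (sub_nonneg.2 hs1) (sub_nonneg.2 hf1)]
    · have hc' : ¬(P (u ∘ τ) ∨ P ((u ∘ τ) ∘ τ)) := by rw [hττ]; tauto
      rw [hEneg u hc, hEneg (u ∘ τ) hc']
  -- uniform bound on s over 0/1 vectors
  set M : ℝ := ∑ b : Fin K → Bool, s (fun k => if b k then 1 else 0) with hM
  have hMle : ∀ g : Fin K → ℝ, (∀ k, g k = 0 ∨ g k = 1) → s g ≤ M := by
    intro g hg
    have hgeq : g = fun k => if (fun k => decide (g k = 1)) k then (1 : ℝ) else 0 := by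
      funext k
      rcases hg k with h0 | h1
      · simp [h0]
      · simp [h1]
    calc s g = s (fun k => if (fun k => decide (g k = 1)) k then (1 : ℝ) else 0) := by rw [← hgeq]
      _ ≤ M := Finset.single_le_sum (f := fun b : Fin K → Bool => s (fun k => if b k then (1:ℝ) else 0))
          (fun b _ => hsNonneg _) (Finset.mem_univ _)
  -- measurability of E
  have hEMeas : Measurable E := by
    have hEfun : E = fun u => fun k =>
        if (u i < u j ∧ D u i = 0 ∧ D u j = 1) ∨
           ((u ∘ Equiv.swap i j) i < (u ∘ Equiv.swap i j) j ∧
             D (u ∘ Equiv.swap i j) i = 0 ∧ D (u ∘ Equiv.swap i j) j = 1)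
        then D u (Equiv.swap i j k) else D u k := by
      funext u k; exact hE u k
    rw [hEfun]
    have hcomp : Measurable (fun u : Fin K → ℝ => u ∘ Equiv.swap i j) :=
      measurable_pi_lambda _ (fun k => measurable_pi_apply _)
    have hPset : MeasurableSet {u : Fin K → ℝ | u i < u j ∧ D u i = 0 ∧ D u j = 1} := by
      apply MeasurableSet.inter
      · exact measurableSet_lt (measurable_pi_apply i) (measurable_pi_apply j)
      · exact MeasurableSet.inter
          (((measurable_pi_apply i).comp hDMeas) (measurableSet_singleton 0))
          (((measurable_pi_apply j).comp hDMeas) (measurableSet_singleton 1))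
    have hCset : MeasurableSet {u : Fin K → ℝ |
        (u i < u j ∧ D u i = 0 ∧ D u j = 1) ∨
        ((u ∘ Equiv.swap i j) i < (u ∘ Equiv.swap i j) j ∧
          D (u ∘ Equiv.swap i j) i = 0 ∧ D (u ∘ Equiv.swap i j) j = 1)} := by
      exact hPset.union (hcomp hPset)
    apply measurable_pi_lambda
    intro k
    exact Measurable.ite hCset ((measurable_pi_apply _).comp hDMeas)
      ((measurable_pi_apply _).comp hDMeas)
  -- integrability
  have cubeMeas : MeasurableSet (unitCube K) := measurableSet_Icc
  have hIntOf : ∀ (G : (Fin K → ℝ) → Fin K → ℝ), Measurable G → (∀ u k, G u k = 0 ∨ G u k = 1) →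
      IntegrableOn (fun u => s (G u) * f h u) (unitCube K) := by
    intro G hGm hG01
    apply Integrable.mono' ((hfInt h).const_mul M)
    · exact ((hsMeas.comp hGm).mul (hfMeas h)).aestronglyMeasurable
    · filter_upwards with u
      rw [Real.norm_eq_abs, abs_of_nonneg (mul_nonneg (hsNonneg _) (hfNonneg _ _))]
      exact mul_le_mul_of_nonneg_right (hMle _ (hG01 u)) (hfNonneg h u)
  have hIntD : IntegrableOn (fun u => s (D u) * f h u) (unitCube K) := hIntOf D hDMeas hD01
  have hIntE : IntegrableOn (fun u => s (E u) * f h u) (unitCube K) := hIntOf E hEMeas hE01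
  -- swap-composed integrals
  have hmp := permComp_measurePreserving K τ
  have hemb := permComp_measurableEmbedding K τ
  have hpre := permComp_preimage_unitCube K τ
  have hswapInt : ∀ (φ : (Fin K → ℝ) → ℝ), IntegrableOn φ (unitCube K) →
      IntegrableOn (fun u => φ (u ∘ τ)) (unitCube K) := by
    intro φ hφ
    have h1 := (hmp.restrict_preimage_emb hemb (unitCube K)).integrable_comp_emb hemb (g := φ)
    rw [hpre] at h1
    exact h1.mpr hφ
  have hswapEq : ∀ (φ : (Fin K → ℝ) → ℝ),
      (∫ u in unitCube K, φ (u ∘ τ)) = ∫ u in unitCube K, φ u := by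
    intro φ
    have := hmp.setIntegral_preimage_emb hemb φ (unitCube K)
    rwa [hpre] at this
  set φ : (Fin K → ℝ) → ℝ := fun u => s (E u) * f h u with hφ
  set ψ : (Fin K → ℝ) → ℝ := fun u => s (D u) * f h u with hψ
  have hIntφτ : IntegrableOn (fun u => φ (u ∘ τ)) (unitCube K) := hswapInt φ hIntE
  have hIntψτ : IntegrableOn (fun u => ψ (u ∘ τ)) (unitCube K) := hswapInt ψ hIntD
  have hmain : (∫ u in unitCube K, φ u) + (∫ u in unitCube K, φ u) ≤
      (∫ u in unitCube K, ψ u) + (∫ u in unitCube K, ψ u) := by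
    calc (∫ u in unitCube K, φ u) + (∫ u in unitCube K, φ u)
        = (∫ u in unitCube K, φ u) + (∫ u in unitCube K, φ (u ∘ τ)) := by rw [hswapEq φ]
      _ = ∫ u in unitCube K, (φ u + φ (u ∘ τ)) := (integral_add hIntE hIntφτ).symm
      _ ≤ ∫ u in unitCube K, (ψ u + ψ (u ∘ τ)) := by
          apply setIntegral_mono_on (hIntE.add hIntφτ) (hIntD.add hIntψτ) cubeMeas
          intro u _
          exact key u
      _ = (∫ u in unitCube K, ψ u) + (∫ u in unitCube K, ψ (u ∘ τ)) := integral_add hIntD hIntψτ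
      _ = (∫ u in unitCube K, ψ u) + (∫ u in unitCube K, ψ u) := by rw [hswapEq ψ]
  linarith

end
end

section
/- Assume the family of densities {f_h : h ∈ {0,1}^K} is non-redundant, and suppose that each of the functions a_i and b_{L,i} (i = 1,…,K, L = 0,…,K−1) is, on Q, a finite linear combination with real coefficients of the densities f_h. Let D : Q → [0,1]^K with 0 ≤ D_K(u) ≤ … ≤ D_1(u) ≤ 1, together with multipliers μ_L ≥ 0 (L = 0,…,K−1) and measurable λ_j : Q → [0,∞) (j = 1,…,K+1), satisfy the stationarity and complementary-slackness optimality conditions at almost every u ∈ Q. If in addition, for every pair 1 ≤ l < j ≤ K+1, the function Σ_{i=l}^{j−1} ( a_i − Σ_{L=0}^{K−1} μ_L b_{L,i} ) is a non-trivial linear combination of the densities f_h, then D(u) ∈ {0,1}^K for almost every u ∈ Q. -/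
/-!
At a point where some `D_i` lies strictly between `0` and `1`, the column
`1 = D_0, D_1, …, D_K, D_{K+1} = 0` has a strict step at or before `i` and another one after
`i`. Complementary slackness kills the multipliers `λ_l`, `λ_j` attached to these two steps, so
summing the stationarity equations over `l ≤ i < j` telescopes to `λ_l - λ_j = 0`: the partial
sum of reduced costs over that block vanishes at the point. Since that partial sum is a
non-trivial combination of the densities, non-redundancy allows this only on a null set.
-/

open MeasureTheory Finset

noncomputable section

/-- The "lower corner" set `Q = {u ∈ [0,1]^K : u 1 ≤ u 2 ≤ … ≤ u K}`. -/
def QSet (K : ℕ) : Set (Fin K → ℝ) :=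
  {u | Monotone u ∧ ∀ i, 0 ≤ u i ∧ u i ≤ 1}

/-- Non-redundancy of the family of densities: every non-trivial linear combination
is non-zero almost everywhere on `[0,1]^K`. -/
def NonRedundant (K : ℕ) (f : (Fin K → Bool) → (Fin K → ℝ) → ℝ) : Prop :=
  ∀ γ : (Fin K → Bool) → ℝ, (∃ h, γ h ≠ 0) →
    ∀ᵐ u ∂(volume.restrict (unitCube K)), (∑ h : Fin K → Bool, γ h * f h u) ≠ 0

lemma QSet_subset_unitCube (K : ℕ) : QSet K ⊆ unitCube K :=
  fun _ hu => ⟨fun i => (hu.2 i).1, fun i => (hu.2 i).2⟩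

lemma isClosed_QSet (K : ℕ) : IsClosed (QSet K) := by
  simp only [QSet, Set.ofPred_and, Set.ofPred_forall]
  exact isClosed_monotone.inter <| isClosed_iInter fun i =>
    (isClosed_le continuous_const (continuous_apply i)).inter
      (isClosed_le (continuous_apply i) continuous_const)

lemma NonRedundant.ae_restrict_sum_ne_zero {K : ℕ} {f : (Fin K → Bool) → (Fin K → ℝ) → ℝ}
    (hf : NonRedundant K f) {s : Set (Fin K → ℝ)} (hs : s ⊆ unitCube K)
    {γ : (Fin K → Bool) → ℝ} (hγ : ∃ h, γ h ≠ 0) :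
    ∀ᵐ u ∂(volume.restrict s), (∑ h, γ h * f h u) ≠ 0 :=
  ae_restrict_of_ae_restrict_of_subset hs (hf γ hγ)

lemma exists_ne_succ_of_ne {α : Type*} {e : ℕ → α} {l j : ℕ} (hlj : l ≤ j) (h : e l ≠ e j) :
    ∃ n, l ≤ n ∧ n < j ∧ e n ≠ e (n + 1) := by
  induction j, hlj using Nat.le_induction with
  | base => exact absurd rfl h
  | succ j hlj ih =>
    by_cases hj : e j = e (j + 1)
    · obtain ⟨n, hln, hnj, hn⟩ := ih (hj ▸ h)
      exact ⟨n, hln, by omega, hn⟩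
    · exact ⟨j, hlj, by omega, hj⟩

lemma sum_ite_mem_Ico_eq_sub {M : Type*} [AddCommGroup M] {K l j : ℕ} (g : ℕ → M)
    (c : Fin K → M) (hc : ∀ k : Fin K, c k = g k - g (k + 1)) (hlj : l ≤ j) (hjK : j ≤ K) :
    ∑ k : Fin K, (if l ≤ (k : ℕ) ∧ (k : ℕ) < j then c k else 0) = g l - g j := by
  simp_rw [hc]
  rw [Fin.sum_univ_eq_sum_range (fun n => if l ≤ n ∧ n < j then g n - g (n + 1) else 0),
    ← sum_filter]
  have hIco : (range K).filter (fun n => l ≤ n ∧ n < j) = Ico l j := by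
    ext n; simp only [mem_filter, mem_range, mem_Ico]; omega
  rw [hIco]
  simpa only [neg_sub_neg] using sum_Ico_sub (fun n => -g n) hlj

def extendByZero {M : Type*} [Zero M] {n : ℕ} (x : Fin n → M) (k : ℕ) : M :=
  if h : k < n then x ⟨k, h⟩ else 0

@[simp]
lemma extendByZero_val {M : Type*} [Zero M] {n : ℕ} (x : Fin n → M) (k : Fin n) :
    extendByZero x k = x k := by
  simp [extendByZero]

/-- The column `D_0 = 1, D_1, …, D_K, D_{K+1} = 0, 0, …` in the paper's 1-based indexing, so
that `lam j` (the paper's `λ_{j+1}`) is complementary to the step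
`paddedColumn d j - paddedColumn d (j + 1)`. -/
def paddedColumn {K : ℕ} (d : Fin K → ℝ) : ℕ → ℝ
  | 0 => 1
  | n + 1 => extendByZero d n

lemma extendByZero_eq_zero_of_paddedColumn_ne {K : ℕ} (hK : 0 < K) {d : Fin K → ℝ}
    {lam : Fin (K + 1) → ℝ} (hlast : lam (Fin.last K) * d ⟨K - 1, Nat.sub_one_lt_of_lt hK⟩ = 0)
    (hmid : ∀ (i : Fin K) (hi : (i : ℕ) + 1 < K),
      lam ⟨(i : ℕ) + 1, Nat.succ_lt_succ i.isLt⟩ * (d i - d ⟨(i : ℕ) + 1, hi⟩) = 0)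
    (hfirst : lam 0 * (d ⟨0, hK⟩ - 1) = 0) {j : ℕ} (hjK : j ≤ K)
    (hj : paddedColumn d j ≠ paddedColumn d (j + 1)) :
    extendByZero lam j = 0 := by
  simp only [extendByZero, dif_pos (Nat.lt_succ_of_le hjK)]
  match j with
  | 0 =>
    refine (mul_eq_zero.mp hfirst).resolve_right (sub_ne_zero.mpr ?_)
    simpa [paddedColumn, extendByZero, hK, eq_comm] using hj
  | m + 1 =>
    by_cases hm : m + 1 < K
    · refine (mul_eq_zero.mp (hmid ⟨m, by omega⟩ hm)).resolve_right (sub_ne_zero.mpr ?_)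
      simpa [paddedColumn, extendByZero, hm, show m < K by omega] using hj
    · obtain rfl : K = m + 1 := by omega
      refine (mul_eq_zero.mp hlast).resolve_right ?_
      simpa [paddedColumn, extendByZero] using hj

lemma exists_sum_ite_mem_Ico_eq_zero {K : ℕ} (hK : 0 < K) {d r : Fin K → ℝ}
    {lam : Fin (K + 1) → ℝ} (hstat : ∀ i, r i - lam i.castSucc + lam i.succ = 0)
    (hlast : lam (Fin.last K) * d ⟨K - 1, Nat.sub_one_lt_of_lt hK⟩ = 0)
    (hmid : ∀ (i : Fin K) (hi : (i : ℕ) + 1 < K),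
      lam ⟨(i : ℕ) + 1, Nat.succ_lt_succ i.isLt⟩ * (d i - d ⟨(i : ℕ) + 1, hi⟩) = 0)
    (hfirst : lam 0 * (d ⟨0, hK⟩ - 1) = 0) {i : Fin K} (h0 : d i ≠ 0) (h1 : d i ≠ 1) :
    ∃ l j : ℕ, l < j ∧ j ≤ K ∧
      ∑ k : Fin K, (if l ≤ (k : ℕ) ∧ (k : ℕ) < j then r k else 0) = 0 := by
  have hpad : paddedColumn d (i + 1) = d i := extendByZero_val d i
  obtain ⟨l, -, hli, hl⟩ := exists_ne_succ_of_ne (e := paddedColumn d) (Nat.zero_le (i + 1))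
    (by rw [hpad]; exact Ne.symm h1)
  obtain ⟨j, hij, hjK, hj⟩ := exists_ne_succ_of_ne (e := paddedColumn d) (l := i + 1) (j := K + 1)
    (by omega) (by simpa [hpad, paddedColumn, extendByZero] using h0)
  refine ⟨l, j, by omega, by omega, ?_⟩
  have hr (k : Fin K) : r k = extendByZero lam k - extendByZero lam (k + 1) := by
    have hcast : extendByZero lam k = lam k.castSucc := extendByZero_val lam k.castSucc
    have hsucc : extendByZero lam (k + 1) = lam k.succ := extendByZero_val lam k.succ
    linarith [hstat k]
  rw [sum_ite_mem_Ico_eq_sub _ r hr (by omega) (by omega),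
    extendByZero_eq_zero_of_paddedColumn_ne hK hlast hmid hfirst (by omega) hl,
    extendByZero_eq_zero_of_paddedColumn_ne hK hlast hmid hfirst (by omega) hj, sub_zero]

/-- Under non-redundancy of the densities, if the objective and constraint
coefficient functions are linear combinations of the densities on `Q`, a feasible `D`
satisfying the Euler–Lagrange stationarity and complementary-slackness conditions, such
that all the relevant partial sums `Σ_{i=l}^{j-1}(a_i - Σ_L μ_L b_{L,i})` are non-trivial
linear combinations of the densities, must be integer (0/1-valued) almost everywhere. -/
theorem EL_solution_is_integer
    (K : ℕ) (hK : 0 < K)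
    (f : (Fin K → Bool) → (Fin K → ℝ) → ℝ)
    (hfred : NonRedundant K f)
    (a : Fin K → (Fin K → ℝ) → ℝ) (b : Fin K → Fin K → (Fin K → ℝ) → ℝ)
    (D : (Fin K → ℝ) → Fin K → ℝ)
    (μ : Fin K → ℝ)
    (lam : Fin (K + 1) → (Fin K → ℝ) → ℝ)
    -- stationarity, a.e. on Q
    (hstat : ∀ᵐ u ∂(volume.restrict (QSet K)), ∀ i : Fin K,
      a i u - (∑ L, μ L * b L i u) - lam i.castSucc u + lam i.succ u = 0)
    -- pointwise complementary slackness, a.e. on Q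
    (hCS2 : ∀ᵐ u ∂(volume.restrict (QSet K)),
      lam (Fin.last K) u * D u ⟨K - 1, by omega⟩ = 0)
    (hCS3 : ∀ᵐ u ∂(volume.restrict (QSet K)), ∀ (i : Fin K) (hi : (i : ℕ) + 1 < K),
      lam ⟨(i : ℕ) + 1, by omega⟩ u * (D u i - D u ⟨(i : ℕ) + 1, hi⟩) = 0)
    (hCS4 : ∀ᵐ u ∂(volume.restrict (QSet K)), lam 0 u * (D u ⟨0, hK⟩ - 1) = 0)
    -- each partial sum of reduced costs is a non-trivial linear combination of densities
    (hnontriv : ∀ l j : ℕ, l < j → j ≤ K →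
      ∃ γ : (Fin K → Bool) → ℝ, (∃ h, γ h ≠ 0) ∧
        ∀ u ∈ QSet K,
          (∑ i : Fin K, if l ≤ (i : ℕ) ∧ (i : ℕ) < j
            then a i u - ∑ L, μ L * b L i u else 0) = ∑ h, γ h * f h u) :
    ∀ᵐ u ∂(volume.restrict (QSet K)), ∀ i, D u i = 0 ∨ D u i = 1 := by
  choose γ hγ hγf using hnontriv
  have hne : ∀ᵐ u ∂(volume.restrict (QSet K)), ∀ l j (hlj : l < j) (hjK : j ≤ K),
      ∑ h, γ l j hlj hjK h * f h u ≠ 0 := by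
    simp only [ae_all_iff]
    exact fun l j hlj hjK =>
      hfred.ae_restrict_sum_ne_zero (QSet_subset_unitCube K) (hγ l j hlj hjK)
  filter_upwards [hstat, hCS2, hCS3, hCS4, hne, ae_restrict_mem (isClosed_QSet K).measurableSet]
    with u hstat hCS2 hCS3 hCS4 hne hu i
  by_contra! h
  obtain ⟨l, j, hlj, hjK, hsum⟩ := exists_sum_ite_mem_Ico_eq_zero hK
    (r := fun i => a i u - ∑ L, μ L * b L i u) (lam := fun j => lam j u)
    hstat hCS2 hCS3 hCS4 h.1 h.2
  exact hne l j hlj hjK (hγf l j hlj hjK u hu ▸ hsum)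

end
end

section
/- Let a_i and b_{L,i} (i = 1,…,K, L = 0,…,K−1) be nonnegative integrable functions on Q and α > 0. For a vector μ ∈ [0,∞)^K define R_i(u) = a_i(u) − Σ_{L=0}^{K−1} μ_L b_{L,i}(u), and define the rule D^μ : Q → {0,1}^K by D^μ_1(u) = 1 if there exists l with 1 ≤ l ≤ K such that Σ_{k=1}^l R_k(u) > 0 (and 0 otherwise), and for i = 2,…,K, D^μ_i(u) = 1 if D^μ_{i−1}(u) = 1 and there exists l with i ≤ l ≤ K such that Σ_{k=i}^l R_k(u) > 0 (and 0 otherwise). Suppose μ* ∈ [0,∞)^K is such that for every L = 0,…,K−1 either μ*_L > 0 and ∫_Q Σ_i b_{L,i}(u) D^{μ*}_i(u) du = α, or μ*_L = 0 and ∫_Q Σ_i b_{L,i}(u) D^{μ*}_i(u) du ≤ α. Then D^{μ*} is an optimal solution of the primal problem: for every measurable D : Q → [0,1]^K with 0 ≤ D_K(u) ≤ … ≤ D_1(u) ≤ 1 pointwise and ∫_Q Σ_i b_{L,i}(u) D_i(u) du ≤ α for all L, one has ∫_Q Σ_i a_i(u) D_i(u) du ≤ ∫_Q Σ_i a_i(u)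 D^{μ*}_i(u) du. -/
open MeasureTheory Finset

noncomputable section

/-- The reduced cost `R_i(u) = a_i(u) − Σ_L μ_L b_{L,i}(u)`. -/
def reducedCost (K : ℕ) (a : Fin K → (Fin K → ℝ) → ℝ)
    (b : Fin K → Fin K → (Fin K → ℝ) → ℝ) (μ : Fin K → ℝ) (i : Fin K)
    (u : Fin K → ℝ) : ℝ :=
  a i u - ∑ L, μ L * b L i u

open Classical in
/-- The candidate rule `D^μ`: `D^μ_i(u) = 1` iff for every `i' ≤ i` some partial sum
`Σ_{k=i'}^l R_k(u)` (with `i' ≤ l ≤ K`) is positive.  This is the closed form of the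
recursion `D^μ_1(u) = 1{∃ l ≥ 1, Σ_{k=1}^l R_k(u) > 0}` and
`D^μ_i(u) = 1{D^μ_{i-1}(u) = 1 and ∃ l ≥ i, Σ_{k=i}^l R_k(u) > 0}`. -/
def Dmu (K : ℕ) (a : Fin K → (Fin K → ℝ) → ℝ)
    (b : Fin K → Fin K → (Fin K → ℝ) → ℝ) (μ : Fin K → ℝ)
    (u : Fin K → ℝ) (i : Fin K) : ℝ :=
  if ∀ i' : Fin K, i' ≤ i → ∃ l : Fin K, i' ≤ l ∧
      0 < ∑ k ∈ Finset.Icc i' l, reducedCost K a b μ k u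
  then 1 else 0

/-! ### Auxiliary lemmas -/

/-- Abel-summation style bound: if all prefix sums of `R` up to `N` are bounded by `B ≥ 0`
and `d` is a nonincreasing nonnegative sequence, then `∑ R n * d n ≤ d 0 * B`. -/
lemma abel_aux : ∀ (N : ℕ) (R d : ℕ → ℝ) (B : ℝ),
    (∀ n, d (n + 1) ≤ d n) → (∀ n, 0 ≤ d n) → 0 ≤ B →
    (∀ n, n ≤ N → ∑ j ∈ Finset.range n, R j ≤ B) →
    ∑ n ∈ Finset.range N, R n * d n ≤ d 0 * B := by
  intro N
  induction N with
  | zero => intro R d B _ hd0 hB _; simpa using mul_nonneg (hd0 0) hB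
  | succ N ih =>
    intro R d B hmono hd0 hB hS
    have hR0 : R 0 ≤ B := by simpa using hS 1 (by omega)
    have h2 : ∑ n ∈ Finset.range N, R (n+1) * d (n+1) ≤ d 1 * (B - R 0) := by
      refine ih (fun n => R (n+1)) (fun n => d (n+1)) (B - R 0)
        (fun n => hmono (n+1)) (fun n => hd0 (n+1)) (by linarith) ?_
      intro n hn
      have h := hS (n+1) (by omega)
      rw [Finset.sum_range_succ'] at h
      linarith
    rw [Finset.sum_range_succ']
    nlinarith [mul_nonneg (sub_nonneg.2 hR0) (sub_nonneg.2 (hmono 0)), hd0 1, hd0 0, hmono 0]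

/-- Pointwise optimality of `Dmu`: for every `u`, it maximizes `∑ R_i d_i` over
nonincreasing `d ∈ [0,1]^K`. -/
lemma pointwise_opt (K : ℕ) (a : Fin K → (Fin K → ℝ) → ℝ)
    (b : Fin K → Fin K → (Fin K → ℝ) → ℝ) (μ : Fin K → ℝ) (u : Fin K → ℝ)
    (d : Fin K → ℝ) (hd0 : ∀ i, 0 ≤ d i) (hd1 : ∀ i, d i ≤ 1)
    (hmono : ∀ i j : Fin K, i ≤ j → d j ≤ d i) :
    ∑ i, reducedCost K a b μ i u * d i ≤
      ∑ i, reducedCost K a b μ i u * Dmu K a b μ u i := by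
  classical
  set rc : Fin K → ℝ := fun i => reducedCost K a b μ i u with hrcdef
  have hrc : ∀ i, reducedCost K a b μ i u = rc i := fun i => rfl
  set R : ℕ → ℝ := fun n => if h : n < K then rc ⟨n, h⟩ else 0 with hR
  set dn : ℕ → ℝ := fun n => if h : n < K then d ⟨n, h⟩ else 0 with hdn
  set S : ℕ → ℝ := fun n => ∑ j ∈ Finset.range n, R j with hSdef
  have hRval : ∀ i : Fin K, R i.val = rc i := by
    intro i; simp only [hR, i.isLt, dif_pos, Fin.eta]
  have hdnval : ∀ i : Fin K, dn i.val = d i := by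
    intro i; simp only [hdn, i.isLt, dif_pos, Fin.eta]
  have hS0 : S 0 = 0 := by simp [hSdef]
  -- bridge sums
  have hbridge : ∀ i l : Fin K, i ≤ l →
      (∑ k ∈ Finset.Icc i l, rc k) = S (l.val + 1) - S i.val := by
    intro i l hil
    have h1 : (∑ k ∈ Finset.Icc i l, rc k) = ∑ n ∈ Finset.Icc i.val l.val, R n := by
      rw [← Fin.map_valEmbedding_Icc, Finset.sum_map]
      exact Finset.sum_congr rfl fun k _ => (hRval k).symm
    rw [h1, ← Finset.Ico_add_one_right_eq_Icc, Finset.sum_Ico_eq_sub _ (by exact Nat.le_succ_of_le (Fin.le_def.1 hil))]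
  -- nat-level condition
  set Cn : ℕ → Prop := fun n => ∀ n' ≤ n, ∃ m, n' ≤ m ∧ m < K ∧ S n' < S (m + 1) with hCn
  have hCiff : ∀ i : Fin K,
      ((∀ i' : Fin K, i' ≤ i → ∃ l : Fin K, i' ≤ l ∧
        0 < ∑ k ∈ Finset.Icc i' l, reducedCost K a b μ k u) ↔ Cn i.val) := by
    intro i
    constructor
    · intro h n' hn'
      have hn'K : n' < K := lt_of_le_of_lt hn' i.isLt
      obtain ⟨l, hl1, hl2⟩ := h ⟨n', hn'K⟩ (by simpa [Fin.le_def] using hn')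
      refine ⟨l.val, Fin.le_def.1 hl1, l.isLt, ?_⟩
      have := hbridge ⟨n', hn'K⟩ l hl1
      simp only [hrc] at hl2
      rw [this] at hl2
      simpa using by linarith
    · intro h i' hi'
      obtain ⟨m, hm1, hm2, hm3⟩ := h i'.val (Fin.le_def.1 hi')
      refine ⟨⟨m, hm2⟩, Fin.le_def.2 hm1, ?_⟩
      have hb := hbridge i' ⟨m, hm2⟩ (Fin.le_def.2 hm1)
      simp only [hrc]
      rw [hb]
      simpa using by linarith
  -- rewrite both sides
  have hLHS : ∑ i, reducedCost K a b μ i u * d i = ∑ n ∈ Finset.range K, R n * dn n := by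
    rw [← Fin.sum_univ_eq_sum_range (fun n => R n * dn n) K]
    exact Finset.sum_congr rfl fun i _ => by rw [hRval i, hdnval i, hrc i]
  have hRHS : ∑ i, reducedCost K a b μ i u * Dmu K a b μ u i
      = ∑ i : Fin K, (if Cn i.val then rc i else 0) := by
    refine Finset.sum_congr rfl fun i _ => ?_
    rw [Dmu, hrc i]
    by_cases h : Cn i.val
    · rw [if_pos ((hCiff i).2 h), if_pos h, mul_one]
    · rw [if_neg (fun hh => h ((hCiff i).1 hh)), if_neg h, mul_zero]
  have hdnmono : ∀ n, dn (n + 1) ≤ dn n := by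
    intro n
    by_cases h1 : n + 1 < K
    · have h2 : n < K := by omega
      simp only [hdn, dif_pos h1, dif_pos h2]
      exact hmono ⟨n, h2⟩ ⟨n + 1, h1⟩ (by simp [Fin.le_def])
    · by_cases h2 : n < K
      · simp only [hdn, dif_neg h1, dif_pos h2]; exact hd0 _
      · simp only [hdn, dif_neg h1, dif_neg h2]; exact le_rfl
  have hdn0 : ∀ n, 0 ≤ dn n := by
    intro n; by_cases h : n < K
    · simp only [hdn, dif_pos h]; exact hd0 _
    · simp only [hdn, dif_neg h]; exact le_rfl
  rw [hLHS, hRHS]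
  set M : Finset ℕ := (Finset.range K).filter Cn with hM
  rcases eq_or_ne M ∅ with hMe | hMne
  · -- empty case
    have hnotCn : ∀ n, n < K → ¬ Cn n := by
      intro n hn hc
      have : n ∈ M := Finset.mem_filter.2 ⟨Finset.mem_range.2 hn, hc⟩
      simp [hMe] at this
    have hRHS0 : ∑ i : Fin K, (if Cn i.val then rc i else 0) = 0 := by
      refine Finset.sum_eq_zero fun i _ => ?_
      rw [if_neg (hnotCn i.val i.isLt)]
    rw [hRHS0]
    have hSle : ∀ n, n ≤ K → S n ≤ 0 := by
      intro n hn
      match n with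
      | 0 => simp [hS0]
      | Nat.succ n =>
        have hK : 0 < K := by omega
        have h0 : ¬ Cn 0 := hnotCn 0 hK
        by_contra hpos
        push_neg at hpos
        exact h0 (fun n' hn' => ⟨n, by omega, by omega, by
          have : n' = 0 := Nat.le_zero.1 hn'
          rw [this, hS0]; linarith⟩)
    have := abel_aux K R dn 0 hdnmono hdn0 le_rfl hSle
    simpa using this
  · -- nonempty case
    have hne : M.Nonempty := Finset.nonempty_iff_ne_empty.2 hMne
    set m : ℕ := M.max' hne with hm
    have hmM : m ∈ M := M.max'_mem hne
    have hmK : m < K := Finset.mem_range.1 (Finset.mem_filter.1 hmM).1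
    have hCm : Cn m := (Finset.mem_filter.1 hmM).2
    have hnotP : ∀ l, m + 1 ≤ l → l < K → S (l + 1) ≤ S (m + 1) := by
      intro l h1 h2
      by_contra hlt
      push_neg at hlt
      have hCm1 : Cn (m + 1) := by
        intro n' hn'
        rcases Nat.lt_or_ge n' (m + 1) with h | h
        · exact hCm n' (by omega)
        · have hn'eq : n' = m + 1 := by omega
          exact ⟨l, by omega, h2, by rw [hn'eq]; exact hlt⟩
      have hmem : m + 1 ∈ M := Finset.mem_filter.2 ⟨Finset.mem_range.2 (by omega), hCm1⟩
      have := M.le_max' _ hmem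
      omega
    have claimA : ∀ t j, j ≤ m → m - j ≤ t → S j < S (m + 1) := by
      intro t
      induction t with
      | zero =>
        intro j hj ht
        have hjm : j = m := by omega
        obtain ⟨l, hl1, hl2, hl3⟩ := hCm j hj
        rcases eq_or_lt_of_le hl1 with h | h
        · rw [hjm] at hl3 ⊢
          rcases eq_or_lt_of_le (show m ≤ l by omega) with he | he
          · rw [← he] at hl3; exact hl3
          · exact lt_of_lt_of_le hl3 (hnotP l (by omega) hl2)
        · -- l > j = m
          rw [hjm] at hl3 ⊢
          have : m ≤ l := by omega
          rcases eq_or_lt_of_le this with he | he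
          · rw [← he] at hl3; exact hl3
          · exact lt_of_lt_of_le hl3 (hnotP l (by omega) hl2)
      | succ t ih =>
        intro j hj ht
        obtain ⟨l, hl1, hl2, hl3⟩ := hCm j hj
        rcases Nat.lt_or_ge l m with h | h
        · have := ih (l + 1) (by omega) (by omega)
          linarith
        · rcases eq_or_lt_of_le h with he | he
          · rw [← he] at hl3; exact hl3
          · exact lt_of_lt_of_le hl3 (hnotP l (by omega) hl2)
    have hBpos : 0 < S (m + 1) := by
      have := claimA m 0 (by omega) (by omega)
      rwa [hS0] at this
    have hSle : ∀ n, n ≤ K → S n ≤ S (m + 1) := by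
      intro n hn
      rcases Nat.lt_or_ge n (m + 1) with h | h
      · exact (claimA m n (by omega) (by omega)).le
      · rcases eq_or_lt_of_le h with he | he
        · rw [← he]
        · have := hnotP (n - 1) (by omega) (by omega)
          have h' : n - 1 + 1 = n := by omega
          rwa [h'] at this
    have hCn_iff : ∀ n, n < K → (Cn n ↔ n ≤ m) := by
      intro n hn
      constructor
      · intro h; exact M.le_max' n (Finset.mem_filter.2 ⟨Finset.mem_range.2 hn, h⟩)
      · intro h n' hn'; exact hCm n' (by omega)
    have hRHSval : ∑ i : Fin K, (if Cn i.val then rc i else 0) = S (m + 1) := by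
      have e1 : ∑ i : Fin K, (if Cn i.val then rc i else 0)
          = ∑ n ∈ Finset.range K, (if n ≤ m then R n else 0) := by
        rw [← Fin.sum_univ_eq_sum_range (fun n => if n ≤ m then R n else 0) K]
        refine Finset.sum_congr rfl fun i _ => ?_
        rw [hRval i]
        by_cases h : Cn i.val
        · rw [if_pos h, if_pos ((hCn_iff i.val i.isLt).1 h)]
        · rw [if_neg h, if_neg (fun hh => h ((hCn_iff i.val i.isLt).2 hh))]
      rw [e1, ← Finset.sum_filter]
      have e2 : (Finset.range K).filter (· ≤ m) = Finset.range (m + 1) := by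
        ext n
        simp only [Finset.mem_filter, Finset.mem_range, Nat.lt_succ_iff]
        omega
      rw [e2]
    rw [hRHSval]
    have habel := abel_aux K R dn (S (m + 1)) hdnmono hdn0 hBpos.le hSle
    have hdn0le : dn 0 ≤ 1 := by
      have h0K : (0 : ℕ) < K := by omega
      simp only [hdn, dif_pos h0K]
      exact hd1 _
    nlinarith [hdn0 0]

lemma measurableSet_QSet (K : ℕ) : MeasurableSet (QSet K) := by
  have : QSet K
      = (⋂ i, ⋂ j, ⋂ (_ : i ≤ j), {u : Fin K → ℝ | u i ≤ u j}) ∩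
        ((⋂ i, {u : Fin K → ℝ | 0 ≤ u i}) ∩ ⋂ i, {u : Fin K → ℝ | u i ≤ 1}) := by
    ext u
    simp only [QSet, Set.mem_inter_iff, Set.mem_iInter, Set.mem_setOf_eq, Monotone]
    exact ⟨fun ⟨h1, h2⟩ => ⟨fun i j hij => h1 hij, fun i => (h2 i).1, fun i => (h2 i).2⟩,
      fun ⟨h1, h2, h3⟩ => ⟨fun i j hij => h1 i j hij, fun i => ⟨h2 i, h3 i⟩⟩⟩
  rw [this]
  refine MeasurableSet.inter ?_ (MeasurableSet.inter ?_ ?_)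
  · exact .iInter fun i => .iInter fun j => .iInter fun _ =>
      measurableSet_le (measurable_pi_apply i) (measurable_pi_apply j)
  · exact .iInter fun i => measurableSet_le measurable_const (measurable_pi_apply i)
  · exact .iInter fun i => measurableSet_le (measurable_pi_apply i) measurable_const

lemma Dmu_bounds (K : ℕ) (a : Fin K → (Fin K → ℝ) → ℝ)
    (b : Fin K → Fin K → (Fin K → ℝ) → ℝ) (μ : Fin K → ℝ) (u : Fin K → ℝ)
    (i : Fin K) : 0 ≤ Dmu K a b μ u i ∧ Dmu K a b μ u i ≤ 1 := by
  rw [Dmu]; split <;> norm_num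

/-- If `μ* ≥ 0` satisfies the feasibility/complementary-slackness
conditions for the rule `D^{μ*}` (for each `L`, either `μ*_L > 0` and the `L`-th
constraint is tight, or `μ*_L = 0` and the constraint holds), then `D^{μ*}` is an
optimal solution of the primal problem. -/
theorem Dmu_is_primal_optimal
    (K : ℕ)
    (a : Fin K → (Fin K → ℝ) → ℝ) (b : Fin K → Fin K → (Fin K → ℝ) → ℝ)
    (haNonneg : ∀ i u, u ∈ QSet K → 0 ≤ a i u)
    (hbNonneg : ∀ L i u, u ∈ QSet K → 0 ≤ b L i u)
    (haInt : ∀ i, IntegrableOn (a i) (QSet K))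
    (hbInt : ∀ L i, IntegrableOn (b L i) (QSet K))
    (α : ℝ) (hα : 0 < α)
    (μstar : Fin K → ℝ) (hμstar : ∀ L, 0 ≤ μstar L)
    (hKKT : ∀ L,
      (0 < μstar L ∧
        (∫ u in QSet K, ∑ i, b L i u * Dmu K a b μstar u i) = α) ∨
      (μstar L = 0 ∧
        (∫ u in QSet K, ∑ i, b L i u * Dmu K a b μstar u i) ≤ α)) :
    ∀ D : (Fin K → ℝ) → Fin K → ℝ, Measurable D →
      (∀ u ∈ QSet K, (∀ i, 0 ≤ D u i ∧ D u i ≤ 1) ∧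
        ∀ i j : Fin K, i ≤ j → D u j ≤ D u i) →
      (∀ L, (∫ u in QSet K, ∑ i, b L i u * D u i) ≤ α) →
      (∫ u in QSet K, ∑ i, a i u * D u i) ≤
        ∫ u in QSet K, ∑ i, a i u * Dmu K a b μstar u i := by
  classical
  intro D hDmeas hDbound hDfeas
  have hQmeas : MeasurableSet (QSet K) := measurableSet_QSet K
  set ρ : Measure (Fin K → ℝ) := volume.restrict (QSet K) with hρ
  have haeQ : ∀ᵐ u ∂ρ, u ∈ QSet K := ae_restrict_mem hQmeas
  -- measurable representatives of a and b on the restricted measure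
  have haSM : ∀ i, AEStronglyMeasurable (a i) ρ := fun i => (haInt i).1
  have hbSM : ∀ L i, AEStronglyMeasurable (b L i) ρ := fun L i => (hbInt L i).1
  set a' : Fin K → (Fin K → ℝ) → ℝ := fun i => (haSM i).mk (a i) with ha'
  set b' : Fin K → Fin K → (Fin K → ℝ) → ℝ := fun L i => (hbSM L i).mk (b L i) with hb'
  have ha'meas : ∀ i, Measurable (a' i) :=
    fun i => (haSM i).stronglyMeasurable_mk.measurable
  have hb'meas : ∀ L i, Measurable (b' L i) :=
    fun L i => (hbSM L i).stronglyMeasurable_mk.measurable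
  have haeEq : ∀ᵐ u ∂ρ, (∀ i, a i u = a' i u) ∧ ∀ L i, b L i u = b' L i u := by
    have h1 : ∀ᵐ u ∂ρ, ∀ i, a i u = a' i u :=
      (ae_all_iff).2 fun i => (haSM i).ae_eq_mk
    have h2 : ∀ᵐ u ∂ρ, ∀ L i, b L i u = b' L i u :=
      (ae_all_iff).2 fun L => (ae_all_iff).2 fun i => (hbSM L i).ae_eq_mk
    exact h1.and h2
  have hDmuEq : ∀ i, (fun u => Dmu K a b μstar u i) =ᵐ[ρ] fun u => Dmu K a' b' μstar u i := by
    intro i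
    filter_upwards [haeEq] with u hu
    have hsum : ∀ i' l : Fin K, (∑ k ∈ Finset.Icc i' l, reducedCost K a b μstar k u)
        = ∑ k ∈ Finset.Icc i' l, reducedCost K a' b' μstar k u := by
      intro i' l
      refine Finset.sum_congr rfl fun k _ => ?_
      rw [reducedCost, reducedCost, hu.1 k]
      congr 1
      exact Finset.sum_congr rfl fun L _ => by rw [hu.2 L k]
    simp only [Dmu, hsum]
  have hDmu'meas : ∀ i, Measurable fun u => Dmu K a' b' μstar u i := by
    intro i
    have hrcmeas : ∀ k : Fin K, Measurable fun u => reducedCost K a' b' μstar k u := by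
      intro k
      exact (ha'meas k).sub
        (Finset.measurable_sum _ fun L _ => (hb'meas L k).const_mul (μstar L))
    have hC : MeasurableSet {u : Fin K → ℝ | ∀ i' : Fin K, i' ≤ i → ∃ l : Fin K, i' ≤ l ∧
        0 < ∑ k ∈ Finset.Icc i' l, reducedCost K a' b' μstar k u} := by
      have he : {u : Fin K → ℝ | ∀ i' : Fin K, i' ≤ i → ∃ l : Fin K, i' ≤ l ∧
          0 < ∑ k ∈ Finset.Icc i' l, reducedCost K a' b' μstar k u}
          = ⋂ i', ⋂ (_ : i' ≤ i), ⋃ l, ⋃ (_ : i' ≤ l),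
            {u : Fin K → ℝ | 0 < ∑ k ∈ Finset.Icc i' l, reducedCost K a' b' μstar k u} := by
        ext u
        simp only [Set.mem_setOf_eq, Set.mem_iInter, Set.mem_iUnion, exists_prop]
      rw [he]
      exact .iInter fun i' => .iInter fun _ => .iUnion fun l => .iUnion fun _ =>
        measurableSet_lt measurable_const (Finset.measurable_sum _ fun k _ => hrcmeas k)
    have heq : (fun u => Dmu K a' b' μstar u i)
        = Set.indicator {u : Fin K → ℝ | ∀ i' : Fin K, i' ≤ i → ∃ l : Fin K, i' ≤ l ∧
            0 < ∑ k ∈ Finset.Icc i' l, reducedCost K a' b' μstar k u} (fun _ => (1 : ℝ)) := by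
      funext u
      rw [Dmu, Set.indicator_apply]
      simp only [Set.mem_setOf_eq]
    rw [heq]
    exact measurable_const.indicator hC
  have hDmuSM : ∀ i, AEStronglyMeasurable (fun u => Dmu K a b μstar u i) ρ :=
    fun i => ((hDmu'meas i).aestronglyMeasurable).congr (hDmuEq i).symm
  -- integrability helper
  have hmulInt : ∀ (f g : (Fin K → ℝ) → ℝ), Integrable f ρ → AEStronglyMeasurable g ρ →
      (∀ᵐ u ∂ρ, 0 ≤ f u) → (∀ᵐ u ∂ρ, 0 ≤ g u ∧ g u ≤ 1) →
      Integrable (fun u => f u * g u) ρ := by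
    intro f g hf hg hf0 hg01
    refine hf.mono' (hf.1.mul hg) ?_
    filter_upwards [hf0, hg01] with u h0 h1
    rw [norm_mul]
    calc ‖f u‖ * ‖g u‖ ≤ ‖f u‖ * 1 := by
          refine mul_le_mul_of_nonneg_left ?_ (norm_nonneg _)
          rw [Real.norm_eq_abs, abs_le]
          exact ⟨by linarith [h1.1], h1.2⟩
      _ = f u := by rw [mul_one, Real.norm_eq_abs, abs_of_nonneg h0]
  have haD : ∀ i, Integrable (fun u => a i u * D u i) ρ := fun i =>
    hmulInt _ _ (haInt i) (((measurable_pi_apply i).comp hDmeas).aestronglyMeasurable)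
      (haeQ.mono fun u hu => haNonneg i u hu)
      (haeQ.mono fun u hu => (hDbound u hu).1 i)
  have hbD : ∀ L i, Integrable (fun u => b L i u * D u i) ρ := fun L i =>
    hmulInt _ _ (hbInt L i) (((measurable_pi_apply i).comp hDmeas).aestronglyMeasurable)
      (haeQ.mono fun u hu => hbNonneg L i u hu)
      (haeQ.mono fun u hu => (hDbound u hu).1 i)
  have haDmu : ∀ i, Integrable (fun u => a i u * Dmu K a b μstar u i) ρ := fun i =>
    hmulInt _ _ (haInt i) (hDmuSM i)
      (haeQ.mono fun u hu => haNonneg i u hu)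
      (Filter.Eventually.of_forall fun u => Dmu_bounds K a b μstar u i)
  have hbDmu : ∀ L i, Integrable (fun u => b L i u * Dmu K a b μstar u i) ρ := fun L i =>
    hmulInt _ _ (hbInt L i) (hDmuSM i)
      (haeQ.mono fun u hu => hbNonneg L i u hu)
      (Filter.Eventually.of_forall fun u => Dmu_bounds K a b μstar u i)
  have hIAD : Integrable (fun u => ∑ i, a i u * D u i) ρ :=
    integrable_finset_sum _ fun i _ => haD i
  have hIBD : ∀ L, Integrable (fun u => ∑ i, b L i u * D u i) ρ := fun L =>
    integrable_finset_sum _ fun i _ => hbD L i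
  have hIADmu : Integrable (fun u => ∑ i, a i u * Dmu K a b μstar u i) ρ :=
    integrable_finset_sum _ fun i _ => haDmu i
  have hIBDmu : ∀ L, Integrable (fun u => ∑ i, b L i u * Dmu K a b μstar u i) ρ := fun L =>
    integrable_finset_sum _ fun i _ => hbDmu L i
  -- algebraic identity
  have halg : ∀ (f : (Fin K → ℝ) → Fin K → ℝ) (u : Fin K → ℝ),
      ∑ i, reducedCost K a b μstar i u * f u i
        = (∑ i, a i u * f u i) - ∑ L, μstar L * ∑ i, b L i u * f u i := by
    intro f u
    simp only [reducedCost, sub_mul, Finset.sum_sub_distrib]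
    congr 1
    simp only [Finset.sum_mul, Finset.mul_sum, mul_assoc]
    exact Finset.sum_comm
  have hIRD : Integrable (fun u => ∑ i, reducedCost K a b μstar i u * D u i) ρ := by
    have he : (fun u => ∑ i, reducedCost K a b μstar i u * D u i)
        = fun u => (∑ i, a i u * D u i) - ∑ L, μstar L * ∑ i, b L i u * D u i :=
      funext fun u => halg D u
    rw [he]
    exact hIAD.sub (integrable_finset_sum _ fun L _ => (hIBD L).const_mul _)
  have hIRDmu : Integrable (fun u => ∑ i, reducedCost K a b μstar i u * Dmu K a b μstar u i) ρ := by
    have he : (fun u => ∑ i, reducedCost K a b μstar i u * Dmu K a b μstar u i)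
        = fun u => (∑ i, a i u * Dmu K a b μstar u i)
            - ∑ L, μstar L * ∑ i, b L i u * Dmu K a b μstar u i :=
      funext fun u => halg (Dmu K a b μstar) u
    rw [he]
    exact hIADmu.sub (integrable_finset_sum _ fun L _ => (hIBDmu L).const_mul _)
  -- integral identities
  have hRDint : (∫ u, (∑ i, reducedCost K a b μstar i u * D u i) ∂ρ)
      = (∫ u, (∑ i, a i u * D u i) ∂ρ)
        - ∑ L, μstar L * ∫ u, (∑ i, b L i u * D u i) ∂ρ := by
    rw [funext (halg D),
      integral_sub hIAD (integrable_finset_sum _ fun L _ => (hIBD L).const_mul _)]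
    congr 1
    rw [integral_finset_sum _ (fun L _ => (hIBD L).const_mul _)]
    exact Finset.sum_congr rfl fun L _ => integral_const_mul _ _
  have hRDmuint : (∫ u, (∑ i, reducedCost K a b μstar i u * Dmu K a b μstar u i) ∂ρ)
      = (∫ u, (∑ i, a i u * Dmu K a b μstar u i) ∂ρ)
        - ∑ L, μstar L * ∫ u, (∑ i, b L i u * Dmu K a b μstar u i) ∂ρ := by
    rw [funext (halg (Dmu K a b μstar)),
      integral_sub hIADmu (integrable_finset_sum _ fun L _ => (hIBDmu L).const_mul _)]
    congr 1
    rw [integral_finset_sum _ (fun L _ => (hIBDmu L).const_mul _)]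
    exact Finset.sum_congr rfl fun L _ => integral_const_mul _ _
  -- pointwise comparison
  have hmono_int : (∫ u, (∑ i, reducedCost K a b μstar i u * D u i) ∂ρ)
      ≤ ∫ u, (∑ i, reducedCost K a b μstar i u * Dmu K a b μstar u i) ∂ρ := by
    refine integral_mono_ae hIRD hIRDmu ?_
    filter_upwards [haeQ] with u hu
    exact pointwise_opt K a b μstar u (D u)
      (fun i => ((hDbound u hu).1 i).1) (fun i => ((hDbound u hu).1 i).2) (hDbound u hu).2
  -- final bookkeeping
  have hsum1 : ∑ L, μstar L * (∫ u, (∑ i, b L i u * D u i) ∂ρ) ≤ ∑ L : Fin K, μstar L * α :=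
    Finset.sum_le_sum fun L _ => mul_le_mul_of_nonneg_left (hDfeas L) (hμstar L)
  have hsum2 : ∑ L, μstar L * (∫ u, (∑ i, b L i u * Dmu K a b μstar u i) ∂ρ)
      = ∑ L : Fin K, μstar L * α := by
    refine Finset.sum_congr rfl fun L _ => ?_
    rcases hKKT L with ⟨_, h⟩ | ⟨h, _⟩
    · rw [h]
    · rw [h]; ring
  linarith [hRDint, hRDmuint, hmono_int, hsum1, hsum2]

end
end

section
/- Assume h-exchangeability of the densities. Then for every symmetric measurable decision rule D : [0,1]^K → {0,1}^K and every 1 ≤ L ≤ K, the average power satisfies Π_L(D) = (L!(K−L)!/L) · ∫_Q Σ_{S ⊆ {1,…,K}, |S| = L} f_S(u) · (Σ_{k ∈ S} D_k(u)) du, where f_S denotes the density under the configuration whose set of false nulls is exactly S, and Q = {u ∈ [0,1]^K : 0 ≤ u_1 ≤ … ≤ u_K ≤ 1}. -/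
/-! Off the null set of points with a repeated coordinate, every `u` has exactly one permutation
`σ` with `u ∘ σ` monotone. Hence the cube is, up to a null set, the disjoint union of the images
of `Q` under the measure-preserving coordinate permutations, and
`∫_{[0,1]^K} g = ∫_Q ∑_σ g (u ∘ σ)`. For `g = f_{h_L} · ∑_{k ≤ L} D_k`, symmetry of `D` and
exchangeability of `f` give `g (u ∘ σ) = f_S(u) ∑_{k ∈ S} D_k(u)` with `S = σ {1,…,L}`, and every
`L`-subset `S` arises from exactly `L!(K-L)!` permutations. -/

open MeasureTheory Finset

noncomputable section

/-- Weak monotonicity: `u i ≤ u j` implies `D i (u) ≥ D j (u)`. -/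
def IsWeaklyMonotone (K : ℕ) (D : (Fin K → ℝ) → Fin K → ℝ) : Prop :=
  ∀ (u : Fin K → ℝ) (i j : Fin K), u i ≤ u j → D u j ≤ D u i

/-- `Π_L(D)`: average power when the first `L` nulls are false. -/
def PiL (K : ℕ) (f : (Fin K → Bool) → (Fin K → ℝ) → ℝ) (L : ℕ)
    (D : (Fin K → ℝ) → Fin K → ℝ) : ℝ :=
  (1 / (L : ℝ)) *
    ∫ u in unitCube K, (∑ k : Fin K, if (k : ℕ) < L then D u k else 0) *
      f (fun k => decide ((k : ℕ) < L)) u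

open scoped Nat

namespace Finset

theorem map_perm_eq_iff {α : Type*} (A B : Finset α) (σ : Equiv.Perm α) :
    A.map σ.toEmbedding = B ↔ ∀ a, σ a ∈ B ↔ a ∈ A := by
  constructor
  · rintro rfl a; simp
  · intro h; ext b; simp [mem_map_equiv, ← h (σ.symm b)]

variable {α : Type*} [Fintype α] [DecidableEq α]

theorem card_perm_map_eq_self (A : Finset α) :
    #{σ : Equiv.Perm α | A.map σ.toEmbedding = A} = (#A)! * (Fintype.card α - #A)! := by
  let χ : α → Bool := fun a => decide (a ∈ A)
  have hfix : ∀ σ : Equiv.Perm α, A.map σ.toEmbedding = A ↔ χ ∘ σ = χ := by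
    intro σ
    simp [map_perm_eq_iff, funext_iff, χ]
  simp_rw [hfix]
  rw [← Fintype.card_subtype, DomMulAct.stabilizer_card, Fintype.prod_bool]
  simp [χ, Fintype.card_subtype, filter_not, card_sdiff]

theorem exists_perm_map_eq {A B : Finset α} (h : #A = #B) :
    ∃ τ : Equiv.Perm α, A.map τ.toEmbedding = B := by
  let e : {x // x ∈ A} ≃ {x // x ∈ B} := Fintype.equivOfCardEq (by simpa using h)
  refine ⟨e.extendSubtype, eq_of_subset_of_card_le ?_ (by simp [h])⟩
  intro b hb
  obtain ⟨a, ha, rfl⟩ := mem_map.1 hb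
  exact e.extendSubtype_mem a ha

theorem card_perm_map_eq {A B : Finset α} (h : #A = #B) :
    #{σ : Equiv.Perm α | A.map σ.toEmbedding = B} = (#A)! * (Fintype.card α - #A)! := by
  obtain ⟨τ, rfl⟩ := exists_perm_map_eq h
  rw [← card_perm_map_eq_self A]
  refine card_bij' (fun σ _ => τ⁻¹ * σ) (fun σ _ => τ * σ) ?_ ?_ (by simp) (by simp)
  all_goals intro σ; simp [map_perm_eq_iff, mem_map_equiv, Equiv.Perm.mul_apply]

theorem sum_perm_map (A : Finset α) {M : Type*} [AddCommMonoid M] (G : Finset α → M) :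
    ∑ σ : Equiv.Perm α, G (A.map σ.toEmbedding) =
      ((#A)! * (Fintype.card α - #A)!) • ∑ S ∈ univ.powersetCard #A, G S := by
  rw [← sum_fiberwise_of_maps_to (t := univ.powersetCard #A) (g := fun σ => A.map σ.toEmbedding)
    (fun σ _ => mem_powersetCard.2 ⟨subset_univ _, card_map _⟩), smul_sum]
  refine sum_congr rfl fun S hS => ?_
  rw [sum_congr rfl fun σ hσ => congrArg G (mem_filter.1 hσ).2, sum_const,
    card_perm_map_eq (mem_powersetCard.1 hS).2.symm]

end Finset

theorem measurableSet_setOf_monotone {ι : Type*} [Countable ι] [Preorder ι] :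
    MeasurableSet {u : ι → ℝ | Monotone u} := by
  have : {u : ι → ℝ | Monotone u} = ⋂ (i) (j) (_ : i ≤ j), {u | u i ≤ u j} := by
    ext u; simp [Monotone]
  rw [this]
  exact .iInter fun i => .iInter fun j => .iInter fun _ =>
    measurableSet_le (measurable_pi_apply i) (measurable_pi_apply j)

theorem volume_setOf_not_injective {ι : Type*} [Fintype ι] [DecidableEq ι] :
    volume {u : ι → ℝ | ¬ Function.Injective u} = 0 := by
  have hcover : {u : ι → ℝ | ¬ Function.Injective u} =
      ⋃ (i) (j) (_ : i ≠ j),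
        (LinearMap.ker ((LinearMap.proj i : (ι → ℝ) →ₗ[ℝ] ℝ) - LinearMap.proj j) : Set _) := by
    ext u; simp [Function.Injective, sub_eq_zero, and_comm]
  rw [hcover]
  refine measure_iUnion_null fun i => measure_iUnion_null fun j => measure_iUnion_null fun hij => ?_
  refine Measure.addHaar_submodule _ _ fun htop => ?_
  have := htop ▸ Submodule.mem_top (x := Pi.single i (1 : ℝ))
  simp [hij.symm] at this

theorem Tuple.existsUnique_monotone_comp {n : ℕ} {α : Type*} [LinearOrder α] {u : Fin n → α}
    (hu : Function.Injective u) : ∃! σ : Equiv.Perm (Fin n), Monotone (u ∘ σ) :=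
  ⟨Tuple.sort u, Tuple.monotone_sort u, fun _ hτ =>
    Equiv.ext fun i => hu (congrFun (Tuple.unique_monotone hτ (Tuple.monotone_sort u)) i)⟩

section Symmetrization

variable {n : ℕ}

def permCoords (σ : Equiv.Perm (Fin n)) : (Fin n → ℝ) ≃ᵐ (Fin n → ℝ) :=
  (MeasurableEquiv.piCongrLeft (fun _ => ℝ) σ).symm

theorem permCoords_apply (σ : Equiv.Perm (Fin n)) (u : Fin n → ℝ) : permCoords σ u = u ∘ σ := rfl

theorem measurePreserving_permCoords (σ : Equiv.Perm (Fin n)) :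
    MeasurePreserving (permCoords σ) :=
  (volume_measurePreserving_piCongrLeft (fun _ => ℝ) σ).symm

theorem indicator_ae_eq_sum_indicator_monotone {s : Set (Fin n → ℝ)}
    {M : Type*} [AddCommMonoid M] (hs : ∀ (σ : Equiv.Perm (Fin n)) u, u ∘ σ ∈ s ↔ u ∈ s)
    (g : (Fin n → ℝ) → M) :
    s.indicator g =ᵐ[volume] fun u => ∑ σ : Equiv.Perm (Fin n),
      (permCoords σ ⁻¹' ({v | Monotone v} ∩ s)).indicator g u := by
  have hinj : ∀ᵐ u : Fin n → ℝ, Function.Injective u :=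
    measure_eq_zero_iff_ae_notMem.1 volume_setOf_not_injective |>.mono fun _ h => not_not.1 h
  filter_upwards [hinj] with u hu
  obtain ⟨σ₀, hσ₀, huniq⟩ := Tuple.existsUnique_monotone_comp hu
  by_cases hus : u ∈ s
  · rw [Set.indicator_of_mem hus, sum_eq_single σ₀]
    · exact (Set.indicator_of_mem (show u ∈ permCoords σ₀ ⁻¹' ({v | Monotone v} ∩ s) from
      Set.mem_inter hσ₀ ((hs σ₀ u).2 hus)) g).symm
    · exact fun σ _ hσ => Set.indicator_of_notMem (fun h => hσ (huniq σ h.1)) g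
    · simp
  · rw [Set.indicator_of_notMem hus]
    exact (sum_eq_zero fun σ _ => Set.indicator_of_notMem (fun h => hus ((hs σ u).1 h.2)) g).symm

theorem setIntegral_eq_setIntegral_monotone_sum_perm {E : Type*} [NormedAddCommGroup E]
    [NormedSpace ℝ E] {s : Set (Fin n → ℝ)} (hs : MeasurableSet s)
    (hperm : ∀ (σ : Equiv.Perm (Fin n)) u, u ∘ σ ∈ s ↔ u ∈ s) {g : (Fin n → ℝ) → E}
    (hg : IntegrableOn g s) :
    ∫ u in s, g u = ∫ u in {u | Monotone u} ∩ s, ∑ σ : Equiv.Perm (Fin n), g (u ∘ σ) := by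
  set Q := {u : Fin n → ℝ | Monotone u} ∩ s
  have hQ : MeasurableSet Q := measurableSet_setOf_monotone.inter hs
  have hpre : ∀ σ, permCoords σ ⁻¹' s = s := fun σ => Set.ext (hperm σ)
  have hcov : ∀ σ, ∫ u in permCoords σ ⁻¹' Q, g u = ∫ v in Q, g (v ∘ σ.symm) := by
    intro σ
    have := (measurePreserving_permCoords σ).setIntegral_preimage_emb
      (permCoords σ).measurableEmbedding (fun v => g (v ∘ σ.symm)) Q
    simpa [permCoords_apply, Function.comp_assoc] using this
  have hint : ∀ σ : Equiv.Perm (Fin n), IntegrableOn (fun v => g (v ∘ σ)) Q := by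
    intro σ
    have := ((measurePreserving_permCoords σ).integrableOn_comp_preimage
      (permCoords σ).measurableEmbedding).2 hg
    exact (hpre σ ▸ this).mono_set Set.inter_subset_right
  calc ∫ u in s, g u
      = ∑ σ : Equiv.Perm (Fin n), ∫ u, (permCoords σ ⁻¹' Q).indicator g u := by
        rw [← integral_indicator hs,
          integral_congr_ae (indicator_ae_eq_sum_indicator_monotone hperm g), integral_finsetSum]
        intro σ _
        refine (hg.mono_set ?_).integrable_indicator (hQ.preimage (permCoords σ).measurable)
        exact (Set.preimage_mono Set.inter_subset_right).trans (hpre σ).subset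
    _ = ∑ σ : Equiv.Perm (Fin n), ∫ v in Q, g (v ∘ σ.symm) := by
        simp_rw [integral_indicator (hQ.preimage (permCoords _).measurable), hcov]
    _ = ∫ v in Q, ∑ σ : Equiv.Perm (Fin n), g (v ∘ σ.symm) :=
        (integral_finsetSum _ fun σ _ => hint σ⁻¹).symm
    _ = ∫ v in Q, ∑ σ : Equiv.Perm (Fin n), g (v ∘ σ) :=
        congrArg _ <| funext fun v =>
          Equiv.sum_comp (Equiv.inv (Equiv.Perm (Fin n))) fun σ => g (v ∘ σ)

end Symmetrization

theorem comp_perm_mem_unitCube_iff {K : ℕ} (σ : Equiv.Perm (Fin K)) (u : Fin K → ℝ) :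
    u ∘ σ ∈ unitCube K ↔ u ∈ unitCube K := by
  simp only [unitCube, Set.mem_Icc, Pi.le_def, Function.comp_apply, Pi.zero_apply, Pi.one_apply]
  rw [σ.forall_congr_right (q := fun i => 0 ≤ u i), σ.forall_congr_right (q := fun i => u i ≤ 1)]

theorem QSet_eq (K : ℕ) : QSet K = {u | Monotone u} ∩ unitCube K := by
  ext u
  simp [QSet, unitCube, Pi.le_def, forall_and]

theorem IsSymmRule.sum_comp_perm {K : ℕ} {D : (Fin K → ℝ) → Fin K → ℝ} (hD : IsSymmRule K D)
    (A : Finset (Fin K)) (σ : Equiv.Perm (Fin K)) (v : Fin K → ℝ) :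
    ∑ k ∈ A, D (v ∘ σ) k = ∑ k ∈ A.map σ.toEmbedding, D v k := by
  rw [hD, sum_map]
  rfl

theorem Exchangeable.apply_comp_perm {K : ℕ} {f : (Fin K → Bool) → (Fin K → ℝ) → ℝ}
    (hf : Exchangeable K f) (A : Finset (Fin K)) (σ : Equiv.Perm (Fin K)) (v : Fin K → ℝ) :
    f (fun k => decide (k ∈ A)) (v ∘ σ) = f (fun k => decide (k ∈ A.map σ.toEmbedding)) v := by
  rw [hf σ (fun k => decide (k ∈ A.map σ.toEmbedding)) v]
  congr 1
  funext k
  simp [mem_map_equiv]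

theorem MeasureTheory.IntegrableOn.mul_sum_of_abs_le_one {ι α : Type*} [MeasurableSpace α]
    {μ : Measure α} {s : Set α} {w : α → ℝ} (hw : IntegrableOn w s μ) {D : α → ι → ℝ}
    (hDMeas : Measurable D) (hD : ∀ u k, |D u k| ≤ 1) (A : Finset ι) :
    IntegrableOn (fun u => w u * ∑ k ∈ A, D u k) s μ := by
  refine hw.mul_bdd (c := #A) (Finset.measurable_sum A fun k _ =>
    (measurable_pi_apply k).comp hDMeas).aestronglyMeasurable (ae_of_all _ fun u => ?_)
  calc ‖∑ k ∈ A, D u k‖ ≤ ∑ k ∈ A, ‖D u k‖ := norm_sum_le _ _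
    _ ≤ ∑ _k ∈ A, (1 : ℝ) := sum_le_sum fun k _ => hD u k
    _ = #A := by simp

theorem PiL_as_integral_over_Q_general
    (K L : ℕ) (hL2 : L ≤ K)
    (f : (Fin K → Bool) → (Fin K → ℝ) → ℝ)
    (hfInt : ∀ h, IntegrableOn (f h) (unitCube K))
    (hExch : Exchangeable K f)
    (D : (Fin K → ℝ) → Fin K → ℝ)
    (hDMeas : Measurable D) (hD01 : ∀ u k, D u k = 0 ∨ D u k = 1)
    (hDSymm : IsSymmRule K D) :
    PiL K f L D =
      ((L.factorial : ℝ) * (K - L).factorial / L) *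
        ∫ u in QSet K,
          ∑ S ∈ Finset.univ.powersetCard L,
            f (fun k => decide (k ∈ S)) u * ∑ k ∈ S, D u k := by
  classical
  set F : Finset (Fin K) := {k | (k : ℕ) < L}
  have hF : #F = L := by rw [Fin.card_filter_val_lt, min_eq_right hL2]
  set g : (Fin K → ℝ) → ℝ := fun u => f (fun k => decide (k ∈ F)) u * ∑ k ∈ F, D u k
  have hPiL : PiL K f L D = 1 / L * ∫ u in unitCube K, g u := by
    simp only [PiL, g, F, sum_filter, mem_filter, mem_univ, true_and, mul_comm]
  have hg : IntegrableOn g (unitCube K) := by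
    refine IntegrableOn.mul_sum_of_abs_le_one (hfInt _) hDMeas (fun u k => ?_) F
    rcases hD01 u k with h | h <;> simp [h]
  have hsym : ∀ v, ∑ σ : Equiv.Perm (Fin K), g (v ∘ σ) = (L ! * (K - L)! : ℝ) *
      ∑ S ∈ univ.powersetCard L, f (fun k => decide (k ∈ S)) v * ∑ k ∈ S, D v k := by
    intro v
    simp only [g, hExch.apply_comp_perm, hDSymm.sum_comp_perm]
    rw [sum_perm_map F fun S => f (fun k => decide (k ∈ S)) v * ∑ k ∈ S, D v k, hF,
      Fintype.card_fin, nsmul_eq_mul]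
    push_cast
    rfl
  rw [hPiL, setIntegral_eq_setIntegral_monotone_sum_perm (s := unitCube K) measurableSet_Icc
    comp_perm_mem_unitCube_iff hg, ← QSet_eq]
  simp_rw [hsym, integral_const_mul]
  ring

/-- Under h-exchangeability, for every symmetric 0/1-valued measurable
decision rule `D` and every `1 ≤ L ≤ K`, the average power can be written as a linear
functional of `D` on the lower corner `Q`:
`Π_L(D) = (L!(K−L)!/L) ∫_Q Σ_{|S|=L} f_S(u) (Σ_{k∈S} D_k(u)) du`. -/
theorem PiL_as_integral_over_Q
    (K L : ℕ) (hL1 : 1 ≤ L) (hL2 : L ≤ K)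
    (f : (Fin K → Bool) → (Fin K → ℝ) → ℝ)
    (hfMeas : ∀ h, Measurable (f h)) (hfNonneg : ∀ h u, 0 ≤ f h u)
    (hfInt : ∀ h, IntegrableOn (f h) (unitCube K))
    (hExch : Exchangeable K f)
    (D : (Fin K → ℝ) → Fin K → ℝ)
    (hDMeas : Measurable D) (hD01 : ∀ u k, D u k = 0 ∨ D u k = 1)
    (hDSymm : IsSymmRule K D) :
    PiL K f L D =
      ((L.factorial : ℝ) * (K - L).factorial / L) *
        ∫ u in QSet K,
          ∑ S ∈ Finset.univ.powersetCard L,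
            f (fun k => decide (k ∈ S)) u * ∑ k ∈ S, D u k :=
  PiL_as_integral_over_Q_general K L hL2 f hfInt hExch D hDMeas hD01 hDSymm

end
end

section
/- Assume h-exchangeability of the densities. Then for every symmetric, weakly monotone measurable decision rule D : [0,1]^K → {0,1}^K, the probability of making at least one rejection when all K nulls are false satisfies Π_any(D) = K! · ∫_Q D_1(u) f_{h_K}(u) du, where Q = {u ∈ [0,1]^K : 0 ≤ u_1 ≤ … ≤ u_K ≤ 1} and h_K = (1,…,1). -/
open MeasureTheory Finset

noncomputable section

/-- `Π_any(D)`: probability of making any rejection when all nulls are false. -/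
def PiAny (K : ℕ) (f : (Fin K → Bool) → (Fin K → ℝ) → ℝ)
    (D : (Fin K → ℝ) → Fin K → ℝ) : ℝ :=
  ∫ u in unitCube K, (if 0 < ∑ k, D u k then (1 : ℝ) else 0) * f (fun _ => true) u

/-- The set where a vector is not injective is null. -/
lemma null_noninj (K : ℕ) : volume {u : Fin K → ℝ | ¬ Function.Injective u} = 0 := by
  have hsub : {u : Fin K → ℝ | ¬ Function.Injective u}
      ⊆ ⋃ (i : Fin K), ⋃ (j : Fin K), ⋃ (_ : i ≠ j), {u | u i = u j} := by
    intro u hu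
    simp only [Set.mem_setOf_eq, Function.Injective, not_forall] at hu
    obtain ⟨i, j, hval, hne⟩ := hu
    exact Set.mem_iUnion.2 ⟨i, Set.mem_iUnion.2 ⟨j, Set.mem_iUnion.2 ⟨hne, hval⟩⟩⟩
  refine measure_mono_null hsub ?_
  refine measure_iUnion_null fun i => measure_iUnion_null fun j => measure_iUnion_null fun hij => ?_
  have : {u : Fin K → ℝ | u i = u j}
      = (LinearMap.ker ((LinearMap.proj i : (Fin K → ℝ) →ₗ[ℝ] ℝ) - LinearMap.proj j) : Set (Fin K → ℝ)) := by
    ext u; simp [LinearMap.mem_ker, sub_eq_zero]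
  rw [this]
  apply Measure.addHaar_submodule
  intro htop
  have h1 : (Pi.single i 1 : Fin K → ℝ) ∈ LinearMap.ker ((LinearMap.proj i : (Fin K → ℝ) →ₗ[ℝ] ℝ) - LinearMap.proj j) := by
    rw [htop]; trivial
  simp [LinearMap.mem_ker, Pi.single_apply, hij, hij.symm] at h1

lemma meas_cube (K : ℕ) : MeasurableSet (unitCube K) := by
  rw [unitCube, ← Set.pi_univ_Icc]
  exact MeasurableSet.pi Set.countable_univ fun i _ => measurableSet_Icc

lemma meas_strictMono (K : ℕ) : MeasurableSet {u : Fin K → ℝ | StrictMono u} := by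
  have : {u : Fin K → ℝ | StrictMono u}
      = ⋂ (i : Fin K), ⋂ (j : Fin K), ⋂ (_ : i < j), {u | u i < u j} := by
    ext u
    simp only [Set.mem_setOf_eq, Set.mem_iInter, StrictMono]
  rw [this]
  exact MeasurableSet.iInter fun i => MeasurableSet.iInter fun j => MeasurableSet.iInter
    fun _ => measurableSet_lt (measurable_pi_apply _) (measurable_pi_apply _)

lemma meas_mono (K : ℕ) : MeasurableSet {u : Fin K → ℝ | Monotone u} := by
  have : {u : Fin K → ℝ | Monotone u}
      = ⋂ (i : Fin K), ⋂ (j : Fin K), ⋂ (_ : i ≤ j), {u | u i ≤ u j} := by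
    ext u
    simp only [Set.mem_setOf_eq, Set.mem_iInter, Monotone]
  rw [this]
  exact MeasurableSet.iInter fun i => MeasurableSet.iInter fun j => MeasurableSet.iInter
    fun _ => measurableSet_le (measurable_pi_apply _) (measurable_pi_apply _)

/-- Under h-exchangeability, for every symmetric, weakly monotone,
0/1-valued measurable decision rule `D`, the probability of at least one rejection when
all `K` nulls are false satisfies `Π_any(D) = K! ∫_Q D_1(u) f_{h_K}(u) du`. -/
theorem PiAny_as_integral_over_Q
    (K : ℕ) (hK : 0 < K)
    (f : (Fin K → Bool) → (Fin K → ℝ) → ℝ)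
    (hfMeas : ∀ h, Measurable (f h)) (hfNonneg : ∀ h u, 0 ≤ f h u)
    (hfInt : ∀ h, IntegrableOn (f h) (unitCube K))
    (hExch : Exchangeable K f)
    (D : (Fin K → ℝ) → Fin K → ℝ)
    (hDMeas : Measurable D) (hD01 : ∀ u k, D u k = 0 ∨ D u k = 1)
    (hDSymm : IsSymmRule K D) (hDMono : IsWeaklyMonotone K D) :
    PiAny K f D =
      (K.factorial : ℝ) *
        ∫ u in QSet K, D u ⟨0, hK⟩ * f (fun _ => true) u := by
  classical
  set f1 : (Fin K → ℝ) → ℝ := f (fun _ => true) with hf1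
  set g : (Fin K → ℝ) → ℝ := fun u => (if 0 < ∑ k, D u k then (1:ℝ) else 0) * f1 u with hgdef
  -- symmetry of g
  have hgsymm : ∀ (σ : Equiv.Perm (Fin K)) (u : Fin K → ℝ), g (u ∘ σ) = g u := by
    intro σ u
    have h1 : ∑ k, D (u ∘ σ) k = ∑ k, D u k := by
      rw [hDSymm σ u]
      exact Equiv.sum_comp σ (D u)
    have h2 : f1 (u ∘ σ) = f1 u := (hExch σ (fun _ => true) u).symm
    simp only [hgdef, h1, h2]
  -- measurability and integrability of g
  have hsum : Measurable fun u => ∑ k, D u k :=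
    Finset.measurable_sum _ fun k _ => (measurable_pi_apply k).comp hDMeas
  have hgMeas : Measurable g := by
    refine Measurable.mul ?_ (hfMeas _)
    exact Measurable.ite (measurableSet_lt measurable_const hsum) measurable_const measurable_const
  have hgle : ∀ u, ‖g u‖ ≤ ‖f1 u‖ := by
    intro u
    by_cases h : 0 < ∑ k, D u k
    · simp [hgdef, h]
    · simp [hgdef, h, norm_nonneg]
  have hgInt : IntegrableOn g (unitCube K) :=
    Integrable.mono (hfInt _) hgMeas.aestronglyMeasurable.restrict (ae_of_all _ hgle)
  -- cube is permutation invariant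
  have hcubeperm : ∀ (σ : Equiv.Perm (Fin K)) (u : Fin K → ℝ),
      u ∈ unitCube K → u ∘ σ ∈ unitCube K := by
    intro σ u hu
    rw [unitCube, Set.mem_Icc] at hu ⊢
    exact ⟨fun i => hu.1 (σ i), fun i => hu.2 (σ i)⟩
  -- chambers
  set A : Set (Fin K → ℝ) := unitCube K ∩ {u | StrictMono u} with hAdef
  have hAmeas : MeasurableSet A := (meas_cube K).inter (meas_strictMono K)
  set S : Equiv.Perm (Fin K) → Set (Fin K → ℝ) := fun σ => (fun u => u ∘ σ) ⁻¹' A with hSdef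
  have hcompMeas : ∀ σ : Equiv.Perm (Fin K), Measurable fun u : Fin K → ℝ => u ∘ σ := by
    intro σ
    exact measurable_pi_lambda _ fun j => measurable_pi_apply (σ j)
  have hSmeas : ∀ σ, MeasurableSet (S σ) := fun σ => hAmeas.preimage (hcompMeas σ)
  have hScube : ∀ σ, S σ ⊆ unitCube K := by
    intro σ u hu
    have h2 : (u ∘ σ) ∘ (σ.symm : Fin K → Fin K) = u := by
      funext x; simp
    have := hcubeperm σ.symm (u ∘ σ) hu.1
    rwa [h2] at this
  have hdisj : Pairwise (Function.onFun Disjoint S) := by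
    intro σ τ hne
    rw [Function.onFun, Set.disjoint_left]
    intro u huσ huτ
    have hsσ : StrictMono (u ∘ σ) := huσ.2
    have hsτ : StrictMono (u ∘ τ) := huτ.2
    have huinj : Function.Injective u := by
      have h2 : (u ∘ σ) ∘ (σ.symm : Fin K → Fin K) = u := by
        funext x; simp
      rw [← h2]
      exact hsσ.injective.comp σ.symm.injective
    have heq : u ∘ σ = u ∘ τ := Tuple.unique_monotone hsσ.monotone hsτ.monotone
    apply hne
    ext i
    exact congrArg Fin.val (huinj (congrFun heq i))
  have hcover : unitCube K \ {u | ¬ Function.Injective u} ⊆ ⋃ σ, S σ := by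
    rintro u ⟨hu1, hu2⟩
    simp only [Set.mem_setOf_eq, not_not] at hu2
    refine Set.mem_iUnion.2 ⟨Tuple.sort u, hcubeperm _ u hu1, ?_⟩
    exact (Tuple.monotone_sort u).strictMono_of_injective (hu2.comp (Equiv.injective _))
  -- ae equality of cube with union of chambers
  have hAE : unitCube K =ᵐ[volume] ⋃ σ, S σ := by
    rw [ae_eq_set]
    constructor
    · refine measure_mono_null ?_ (null_noninj K)
      intro u ⟨hu1, hu2⟩
      by_contra hinj
      simp only [Set.mem_setOf_eq, not_not] at hinj
      exact hu2 (hcover ⟨hu1, fun h => h hinj⟩)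
    · have : (⋃ σ, S σ) \ unitCube K = ∅ := by
        rw [Set.diff_eq_empty]
        exact Set.iUnion_subset hScube
      rw [this, measure_empty]
  -- the permutation map as a measurable equiv
  have hT : ∀ (σ : Equiv.Perm (Fin K)) (u : Fin K → ℝ),
      (MeasurableEquiv.piCongrLeft (fun _ : Fin K => ℝ) σ.symm) u = u ∘ σ := by
    intro σ u
    funext j
    have h := MeasurableEquiv.piCongrLeft_apply_apply (β := fun _ : Fin K => ℝ) (σ.symm : Fin K ≃ Fin K) u (σ j)
    simpa using h
  have hstep : ∀ σ : Equiv.Perm (Fin K), ∫ u in S σ, g u = ∫ u in A, g u := by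
    intro σ
    have hmp := volume_measurePreserving_piCongrLeft (fun _ : Fin K => ℝ) (σ.symm : Fin K ≃ Fin K)
    have hemb := (MeasurableEquiv.piCongrLeft (fun _ : Fin K => ℝ) (σ.symm : Fin K ≃ Fin K)).measurableEmbedding
    have h1 : S σ = (MeasurableEquiv.piCongrLeft (fun _ : Fin K => ℝ) (σ.symm : Fin K ≃ Fin K)) ⁻¹' A := by
      ext u
      simp only [hSdef, Set.mem_preimage, hT σ u]
    have h2 : ∀ u, g ((MeasurableEquiv.piCongrLeft (fun _ : Fin K => ℝ) (σ.symm : Fin K ≃ Fin K)) u) = g u := by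
      intro u; rw [hT σ u]; exact hgsymm σ u
    rw [h1, ← hmp.setIntegral_preimage_emb hemb g A]
    simp only [h2]
  -- Q-side identifications
  have hQeq : QSet K = {u | Monotone u} ∩ unitCube K := by
    ext u
    simp only [QSet, unitCube, Set.mem_setOf_eq, Set.mem_inter_iff, Set.mem_Icc, Pi.le_def,
      forall_and]
    tauto
  have hQmeas : MeasurableSet (QSet K) := by
    rw [hQeq]; exact (meas_mono K).inter (meas_cube K)
  have hQAE : QSet K =ᵐ[volume] A := by
    rw [ae_eq_set]
    constructor
    · refine measure_mono_null ?_ (null_noninj K)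
      rintro u ⟨hu1, hu2⟩
      rw [hQeq] at hu1
      intro hinj
      exact hu2 ⟨hu1.2, hu1.1.strictMono_of_injective hinj⟩
    · have : A \ QSet K = ∅ := by
        rw [Set.diff_eq_empty, hQeq]
        rintro u ⟨hu1, hu2⟩
        exact ⟨hu2.monotone, hu1⟩
      rw [this, measure_empty]
  -- on QSet, g equals D_1 * f1
  have hQg : ∀ u ∈ QSet K, D u ⟨0, hK⟩ * f1 u = g u := by
    intro u hu
    have hDnonneg : ∀ k, 0 ≤ D u k := by
      intro k; rcases hD01 u k with h | h <;> rw [h] <;> norm_num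
    rcases hD01 u ⟨0, hK⟩ with h0 | h0
    · have hle : ∀ j, D u j ≤ 0 := by
        intro j
        have h1 : u ⟨0, hK⟩ ≤ u j := hu.1 (Fin.mk_le_of_le_val (Nat.zero_le _))
        have := hDMono u ⟨0, hK⟩ j h1
        rwa [h0] at this
      have hz : ∀ j, D u j = 0 := fun j => le_antisymm (hle j) (hDnonneg j)
      have hsumz : ∑ k, D u k = 0 := Finset.sum_eq_zero fun k _ => hz k
      simp [hgdef, hsumz, h0]
    · have hpos : 0 < ∑ k, D u k := by
        have h1 : D u ⟨0, hK⟩ ≤ ∑ k, D u k :=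
          Finset.single_le_sum (fun k _ => hDnonneg k) (Finset.mem_univ _)
        rw [h0] at h1; linarith
      simp [hgdef, hpos, h0]
  -- assemble
  have hUsub : (⋃ σ, S σ) ⊆ unitCube K := Set.iUnion_subset hScube
  calc PiAny K f D = ∫ u in unitCube K, g u := by rw [PiAny]
    _ = ∫ u in ⋃ σ, S σ, g u := setIntegral_congr_set hAE
    _ = ∑' σ : Equiv.Perm (Fin K), ∫ u in S σ, g u :=
        integral_iUnion hSmeas hdisj (hgInt.mono_set hUsub)
    _ = ∑ σ : Equiv.Perm (Fin K), ∫ u in S σ, g u := tsum_fintype _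
    _ = ∑ σ : Equiv.Perm (Fin K), ∫ u in A, g u := by
        exact Finset.sum_congr rfl fun σ _ => hstep σ
    _ = (K.factorial : ℝ) * ∫ u in A, g u := by
        rw [Finset.sum_const, Finset.card_univ, Fintype.card_perm, Fintype.card_fin,
          nsmul_eq_mul]
    _ = (K.factorial : ℝ) * ∫ u in QSet K, g u := by
        rw [setIntegral_congr_set hQAE]
    _ = (K.factorial : ℝ) * ∫ u in QSet K, D u ⟨0, hK⟩ * f1 u := by
        rw [setIntegral_congr_fun hQmeas hQg]


end
end

section
/- Let K ≥ 1, α ∈ (0,1), and θ < 0. Let g_θ(u) = φ(Φ^{-1}(u) − θ)/φ(Φ^{-1}(u)) for u ∈ (0,1), and let A* = {u ∈ [0,1]^K : Σ_{i=1}^K Φ^{-1}(u_i)/√K < z_α}. Then the Lebesgue measure of A* equals α, and for every Lebesgue-measurable set A ⊆ [0,1]^K with Lebesgue measure at most α, ∫_A Π_{i=1}^K g_θ(u_i) du ≤ ∫_{A*} Π_{i=1}^K g_θ(u_i) du. That is, among all level-α rejection regions for the global null (all K p-values uniform), the region rejecting when Σ_i Φ^{-1}(u_i)/√K < z_α maximizes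 the probability of rejection when all K p-values are independent with density g_θ. -/
/-!
The probability integral transform `x ↦ (Φ(x_i))_i` carries the standard Gaussian measure on
`ℝ^K` to Lebesgue measure on the cube, and `A*` is, up to a null set, the image of the half-space
`{x | Σ x_i / √K < z_α}`. Since `Σ x_i / √K` is again standard normal, `A*` has measure
`Φ(z_α) = α`.

For optimality, `Π g_θ(u_i) = exp(θ √K T(u) - K θ²/2)` with `T(u) = Σ Φ⁻¹(u_i) / √K`, a
decreasing function of `T` because `θ < 0`. So the density is at least its value `c` at the
threshold `T = z_α` on `A* \ A` and at most `c` on `A \ A*`, and this is the Neyman–Pearson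
argument: `∫ (1_{A*} - 1_A)(f - c) ≥ 0` together with `vol A ≤ vol A*` gives
`∫_A f ≤ ∫_{A*} f`.
-/

open MeasureTheory Finset

noncomputable section

/-- The standard normal density `φ`. -/
def stdNormalPDF (x : ℝ) : ℝ := (Real.sqrt (2 * Real.pi))⁻¹ * Real.exp (-(x ^ 2) / 2)

/-- The standard normal CDF `Φ`. -/
def stdNormalCDF (x : ℝ) : ℝ := ∫ t in Set.Iic x, stdNormalPDF t

/-- The standard normal quantile function `Φ⁻¹` (so `z_α = stdNormalQuantile α`). -/
def stdNormalQuantile : ℝ → ℝ := Function.invFun stdNormalCDF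

/-- `g_θ(u) = φ(Φ⁻¹(u) − θ)/φ(Φ⁻¹(u))`, the density on `(0,1)` of `Φ(X)` for
`X ~ N(θ, 1)`. -/
def gTheta (θ u : ℝ) : ℝ :=
  stdNormalPDF (stdNormalQuantile u - θ) / stdNormalPDF (stdNormalQuantile u)

/-- Joint density of the p-values in the independent Gaussian p-value model with
parameter `θ`, under configuration `h`: coordinates with `h k = 1` have density `g_θ`,
the others are uniform. -/
def gaussDensity (K : ℕ) (θ : ℝ) (h : Fin K → Bool) (u : Fin K → ℝ) : ℝ :=
  ∏ k, if h k then gTheta θ (u k) else 1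

/-- FDR of a decision rule `D` under configuration `h` in the independent Gaussian
p-value model with parameter `θ`. -/
def gaussFDR (K : ℕ) (θ : ℝ) (h : Fin K → Bool)
    (D : (Fin K → ℝ) → Fin K → ℝ) : ℝ :=
  ∫ u in unitCube K,
    ((∑ k, if h k then 0 else D u k) / max (∑ k, D u k) 1) * gaussDensity K θ h u

/-- Average power `Π_{θ,K}(D)` when all `K` nulls are false. -/
def gaussAvgPower (K : ℕ) (θ : ℝ) (D : (Fin K → ℝ) → Fin K → ℝ) : ℝ :=
  (1 / (K : ℝ)) *
    ∫ u in unitCube K, (∑ k, D u k) * gaussDensity K θ (fun _ => true) u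

open Classical in
/-- The rule `D̂` that rejects all `K` hypotheses iff `Σ_i Φ⁻¹(u_i)/√K < z_α`. -/
def globalRule (K : ℕ) (α : ℝ) (u : Fin K → ℝ) (_k : Fin K) : ℝ :=
  if (∑ i, stdNormalQuantile (u i)) / Real.sqrt K < stdNormalQuantile α then 1 else 0

/-- The region `A* = {u ∈ [0,1]^K : Σ_i Φ⁻¹(u_i)/√K < z_α}`. -/
def globalRejectRegion (K : ℕ) (α : ℝ) : Set (Fin K → ℝ) :=
  {u | u ∈ unitCube K ∧
    (∑ i, stdNormalQuantile (u i)) / Real.sqrt K < stdNormalQuantile α}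


open ProbabilityTheory
open scoped NNReal ENNReal

lemma stdNormalPDF_eq_gaussianPDFReal : stdNormalPDF = gaussianPDFReal 0 1 := by
  ext x
  simp [stdNormalPDF, gaussianPDFReal]

lemma integrable_stdNormalPDF : Integrable stdNormalPDF := by
  rw [stdNormalPDF_eq_gaussianPDFReal]
  exact integrable_gaussianPDFReal 0 1

lemma stdNormalCDF_eq_cdf : stdNormalCDF = cdf (gaussianReal 0 1) := by
  ext x
  rw [cdf_eq_real, measureReal_def, gaussianReal_apply_eq_integral 0 one_ne_zero,
    ENNReal.toReal_ofReal (setIntegral_nonneg measurableSet_Iic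
      fun y _ => gaussianPDFReal_nonneg 0 1 y), stdNormalCDF, stdNormalPDF_eq_gaussianPDFReal]

@[fun_prop]
lemma continuous_stdNormalCDF : Continuous stdNormalCDF :=
  continuous_iff_continuousAt.2 fun x =>
    (integrable_stdNormalPDF.integrableOn.continuousOn_Iic_primitive_Iic
      (a₀ := x + 1)).continuousAt (Iic_mem_nhds (lt_add_one x))

@[fun_prop]
lemma measurable_stdNormalCDF : Measurable stdNormalCDF :=
  continuous_stdNormalCDF.measurable

lemma strictMono_stdNormalCDF : StrictMono stdNormalCDF := by
  intro a b hab
  have hpos : 0 < ∫ t in a..b, stdNormalPDF t := by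
    refine intervalIntegral.intervalIntegral_pos_of_pos
      integrable_stdNormalPDF.intervalIntegrable (fun t => ?_) hab
    rw [stdNormalPDF_eq_gaussianPDFReal]
    exact gaussianPDFReal_pos 0 1 t one_ne_zero
  rw [← intervalIntegral.integral_Iic_sub_Iic integrable_stdNormalPDF.integrableOn
    integrable_stdNormalPDF.integrableOn] at hpos
  simpa [stdNormalCDF] using hpos

lemma range_stdNormalCDF : Set.range stdNormalCDF = Set.Ioo 0 1 := by
  have hbot := stdNormalCDF_eq_cdf ▸ tendsto_cdf_atBot (μ := gaussianReal 0 1)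
  have htop := stdNormalCDF_eq_cdf ▸ tendsto_cdf_atTop (μ := gaussianReal 0 1)
  refine Set.Subset.antisymm ?_ fun y hy => ?_
  · rintro _ ⟨x, rfl⟩
    refine ⟨?_, ?_⟩
    · calc 0 ≤ stdNormalCDF (x - 1) := stdNormalCDF_eq_cdf ▸ cdf_nonneg _ _
        _ < stdNormalCDF x := strictMono_stdNormalCDF (sub_one_lt x)
    · calc stdNormalCDF x < stdNormalCDF (x + 1) := strictMono_stdNormalCDF (lt_add_one x)
        _ ≤ 1 := stdNormalCDF_eq_cdf ▸ cdf_le_one _ _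
  · exact mem_range_of_exists_le_of_exists_ge continuous_stdNormalCDF
      ((hbot.eventually (eventually_le_nhds hy.1)).exists)
      ((htop.eventually (eventually_ge_nhds hy.2)).exists)

lemma stdNormalCDF_stdNormalQuantile {y : ℝ} (hy : y ∈ Set.Ioo 0 1) :
    stdNormalCDF (stdNormalQuantile y) = y :=
  Function.invFun_eq (by rwa [← Set.mem_range, range_stdNormalCDF])

lemma stdNormalQuantile_stdNormalCDF (x : ℝ) : stdNormalQuantile (stdNormalCDF x) = x :=
  Function.leftInverse_invFun strictMono_stdNormalCDF.injective x

lemma stdNormalCDF_mem_Ioo (x : ℝ) : stdNormalCDF x ∈ Set.Ioo 0 1 :=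
  range_stdNormalCDF ▸ Set.mem_range_self x

lemma gaussianReal_Iic_eq_stdNormalCDF (x : ℝ) :
    gaussianReal 0 1 (Set.Iic x) = ENNReal.ofReal (stdNormalCDF x) := by
  rw [stdNormalCDF_eq_cdf, ofReal_cdf]

@[fun_prop]
lemma measurable_stdNormalQuantile : Measurable stdNormalQuantile := by
  refine measurable_of_restrict_of_restrict_compl
    (measurableSet_Ioo (a := (0 : ℝ)) (b := 1)) ?_ ?_
  · refine Monotone.measurable fun y y' hyy' => ?_
    rw [← strictMono_stdNormalCDF.le_iff_le, Set.domRestrict_apply, Set.domRestrict_apply,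
      stdNormalCDF_stdNormalQuantile y.2, stdNormalCDF_stdNormalQuantile y'.2]
    exact hyy'
  · convert measurable_const with y
    exact Function.invFun_neg (by rw [← Set.mem_range, range_stdNormalCDF]; exact y.2)

lemma map_stdNormalCDF_gaussianReal :
    (gaussianReal 0 1).map stdNormalCDF = volume.restrict (Set.Ioo 0 1) := by
  have : IsProbabilityMeasure ((gaussianReal 0 1).map stdNormalCDF) :=
    Measure.isProbabilityMeasure_map measurable_stdNormalCDF.aemeasurable
  refine Measure.ext_of_Iic _ _ fun a => ?_
  rw [Measure.map_apply measurable_stdNormalCDF measurableSet_Iic,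
    Measure.restrict_apply measurableSet_Iic]
  rcases le_or_gt a 0 with ha0 | ha0
  · have hpre : stdNormalCDF ⁻¹' Set.Iic a = ∅ :=
      Set.eq_empty_of_forall_notMem fun x hx => (stdNormalCDF_mem_Ioo x).1.not_ge (hx.trans ha0)
    have hint : Set.Iic a ∩ Set.Ioo 0 1 = ∅ :=
      Set.eq_empty_of_forall_notMem fun x hx => hx.2.1.not_ge (hx.1.trans ha0)
    rw [hpre, hint, measure_empty, measure_empty]
  rcases lt_or_ge a 1 with ha1 | ha1
  · have hpre : stdNormalCDF ⁻¹' Set.Iic a = Set.Iic (stdNormalQuantile a) := by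
      ext x
      rw [Set.mem_preimage, Set.mem_Iic, Set.mem_Iic,
        ← strictMono_stdNormalCDF.le_iff_le (b := stdNormalQuantile a),
        stdNormalCDF_stdNormalQuantile ⟨ha0, ha1⟩]
    have hint : Set.Iic a ∩ Set.Ioo 0 1 = Set.Ioc 0 a := by
      ext x
      simp only [Set.mem_inter_iff, Set.mem_Iic, Set.mem_Ioo, Set.mem_Ioc]
      grind
    rw [hpre, gaussianReal_Iic_eq_stdNormalCDF, stdNormalCDF_stdNormalQuantile ⟨ha0, ha1⟩, hint,
      Real.volume_Ioc, sub_zero]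
  · have hpre : stdNormalCDF ⁻¹' Set.Iic a = Set.univ :=
      Set.eq_univ_of_forall fun x => ((stdNormalCDF_mem_Ioo x).2.le.trans ha1 : _)
    have hint : Set.Iic a ∩ Set.Ioo 0 1 = Set.Ioo 0 1 :=
      Set.inter_eq_right.2 fun x hx => hx.2.le.trans ha1
    rw [hpre, hint, measure_univ, Real.volume_Ioo, sub_zero, ENNReal.ofReal_one]

section Gaussian

variable {ι : Type*} [Fintype ι]

lemma map_sum_pi_gaussianReal (m : ι → ℝ) (v : ι → ℝ≥0) :
    (Measure.pi fun i => gaussianReal (m i) (v i)).map (fun x => ∑ i, x i) =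
      gaussianReal (∑ i, m i) (∑ i, v i) := by
  refine Measure.ext_of_charFun ?_
  ext t
  rw [charFun_map_sum_pi_eq_prod, Finset.prod_apply]
  simp_rw [charFun_gaussianReal, ← Complex.exp_sum]
  push_cast
  congr 1
  simp only [Finset.mul_sum, Finset.sum_mul, ← Finset.sum_sub_distrib, Finset.sum_div]

lemma map_sum_div_sqrt_pi_gaussianReal [Nonempty ι] :
    (Measure.pi fun _ : ι => gaussianReal 0 1).map
      (fun x => (∑ i, x i) / Real.sqrt (Fintype.card ι)) = gaussianReal 0 1 := by
  have hsum := map_sum_pi_gaussianReal (ι := ι) (fun _ => 0) (fun _ => 1)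
  rw [← Function.comp_def (· / Real.sqrt (Fintype.card ι)), ← Measure.map_map (by fun_prop)
    (by fun_prop), hsum, gaussianReal_map_div_const]
  congr 1
  · simp
  · ext
    simp [Real.sq_sqrt]

lemma volume_restrict_Icc_eq_map_pi_gaussianReal :
    volume.restrict (Set.Icc (0 : ι → ℝ) 1) =
      (Measure.pi fun _ : ι => gaussianReal 0 1).map (fun x i => stdNormalCDF (x i)) := by
  rw [Measure.pi_map_pi fun _ => measurable_stdNormalCDF.aemeasurable,
    map_stdNormalCDF_gaussianReal, ← Measure.restrict_pi_pi, ← volume_pi]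
  exact Measure.restrict_congr_set Measure.univ_pi_Ioo_ae_eq_Icc |>.symm

end Gaussian

section NeymanPearson

variable {X : Type*} [MeasurableSpace X] {μ : Measure X}

theorem setIntegral_le_setIntegral_of_le_const_of_const_le {f : X → ℝ} {A B : Set X} {c : ℝ}
    (hA : MeasurableSet A) (hB : MeasurableSet B) (hfA : IntegrableOn f A μ)
    (hfB : IntegrableOn f B μ) (hμB : μ B ≠ ∞) (hμ : μ A ≤ μ B) (hc : 0 ≤ c)
    (hle : ∀ x ∈ A \ B, f x ≤ c) (hge : ∀ x ∈ B \ A, c ≤ f x) :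
    ∫ x in A, f x ∂μ ≤ ∫ x in B, f x ∂μ := by
  have hμA : μ A ≠ ∞ := ne_top_of_le_ne_top hμB hμ
  have hgA : IntegrableOn (fun x => f x - c) A μ := hfA.sub (integrableOn_const hμA)
  have hgB : IntegrableOn (fun x => f x - c) B μ := hfB.sub (integrableOn_const hμB)
  have hpointwise :
      ∀ x, 0 ≤ B.indicator (fun x => f x - c) x - A.indicator (fun x => f x - c) x := by
    intro x
    by_cases hxA : x ∈ A <;> by_cases hxB : x ∈ B
    · simp [hxA, hxB]
    · simpa [hxA, hxB] using hle x ⟨hxA, hxB⟩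
    · simpa [hxA, hxB] using hge x ⟨hxB, hxA⟩
    · simp [hxA, hxB]
  have key :
      0 ≤ ∫ x, B.indicator (fun x => f x - c) x - A.indicator (fun x => f x - c) x ∂μ :=
    integral_nonneg hpointwise
  rw [integral_sub (hgB.integrable_indicator hB) (hgA.integrable_indicator hA),
    integral_indicator hB, integral_indicator hA, integral_sub hfB (integrableOn_const hμB),
    integral_sub hfA (integrableOn_const hμA), setIntegral_const, setIntegral_const,
    smul_eq_mul, smul_eq_mul] at key
  have hμc : μ.real A * c ≤ μ.real B * c :=
    mul_le_mul_of_nonneg_right ((ENNReal.toReal_le_toReal hμA hμB).2 hμ) hc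
  linarith

theorem setIntegral_antitone_comp_le_lowerTail {T : X → ℝ} {h : ℝ → ℝ} {t : ℝ}
    {A C : Set X} (hh : Antitone h) (ht : 0 ≤ h t) (hA : MeasurableSet A)
    (hB : MeasurableSet {x | x ∈ C ∧ T x < t}) (hAC : A ⊆ C)
    (hint : IntegrableOn (fun x => h (T x)) C μ) (hμB : μ {x | x ∈ C ∧ T x < t} ≠ ∞)
    (hμ : μ A ≤ μ {x | x ∈ C ∧ T x < t}) :
    ∫ x in A, h (T x) ∂μ ≤ ∫ x in {x | x ∈ C ∧ T x < t}, h (T x) ∂μ :=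
  setIntegral_le_setIntegral_of_le_const_of_const_le hA hB (hint.mono_set hAC)
    (hint.mono_set fun _ hx => hx.1) hμB hμ ht
    (fun _ hx => hh (not_lt.1 fun hxt => hx.2 ⟨hAC hx.1, hxt⟩)) (fun _ hx => hh hx.1.2.le)

end NeymanPearson

section GaussianPValues

lemma gTheta_eq_exp (θ u : ℝ) :
    gTheta θ u = Real.exp (θ * stdNormalQuantile u - θ ^ 2 / 2) := by
  rw [gTheta, stdNormalPDF, stdNormalPDF,
    mul_div_mul_left _ _ (by positivity : (Real.sqrt (2 * Real.pi))⁻¹ ≠ 0), ← Real.exp_sub]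
  ring_nf

@[fun_prop]
lemma measurable_gTheta (θ : ℝ) : Measurable (gTheta θ) := by
  simp_rw [funext (gTheta_eq_exp θ)]
  fun_prop

lemma integrableOn_prod_gTheta {ι : Type*} [Fintype ι] (θ : ℝ) :
    IntegrableOn (fun u : ι → ℝ => ∏ i, gTheta θ (u i)) (Set.Icc 0 1) := by
  rw [IntegrableOn, volume_restrict_Icc_eq_map_pi_gaussianReal,
    integrable_map_measure (Measurable.aestronglyMeasurable (by fun_prop))
      (Measurable.aemeasurable (by fun_prop))]
  simp only [Function.comp_def, gTheta_eq_exp, stdNormalQuantile_stdNormalCDF, sub_eq_add_neg,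
    Real.exp_add]
  exact Integrable.fintype_prod fun _ => (integrable_exp_mul_gaussianReal θ).mul_const _

variable {K : ℕ}

lemma measurableSet_globalRejectRegion (α : ℝ) : MeasurableSet (globalRejectRegion K α) :=
  measurableSet_Icc.inter
    (measurableSet_lt (f := fun u : Fin K → ℝ => (∑ i, stdNormalQuantile (u i)) / Real.sqrt K)
      (by fun_prop) measurable_const)

lemma volume_globalRejectRegion (hK : 1 ≤ K) {α : ℝ} (hα : α ∈ Set.Ioo 0 1) :
    volume (globalRejectRegion K α) = ENNReal.ofReal α := by
  have : Nonempty (Fin K) := ⟨⟨0, hK⟩⟩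
  have := nullSingletonClass_gaussianReal (μ := 0) one_ne_zero
  have hlaw := map_sum_div_sqrt_pi_gaussianReal (ι := Fin K)
  rw [Fintype.card_fin] at hlaw
  set T : (Fin K → ℝ) → ℝ := fun u => (∑ i, stdNormalQuantile (u i)) / Real.sqrt K
  have hT : Measurable T := by fun_prop
  calc volume (globalRejectRegion K α)
      = volume.restrict (unitCube K) (T ⁻¹' Set.Iio (stdNormalQuantile α)) := by
        rw [unitCube, Measure.restrict_apply' measurableSet_Icc, Set.inter_comm]
        rfl
    _ = gaussianReal 0 1 (Set.Iio (stdNormalQuantile α)) := by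
        rw [unitCube, volume_restrict_Icc_eq_map_pi_gaussianReal,
          Measure.map_apply (by fun_prop) (hT measurableSet_Iio)]
        conv_rhs => rw [← hlaw, Measure.map_apply (by fun_prop) measurableSet_Iio]
        simp only [T, ← Set.preimage_comp, Function.comp_def, stdNormalQuantile_stdNormalCDF]
    _ = ENNReal.ofReal α := by
        rw [measure_congr Iio_ae_eq_Iic, gaussianReal_Iic_eq_stdNormalCDF,
          stdNormalCDF_stdNormalQuantile hα]

lemma prod_gTheta_eq_exp (hK : 1 ≤ K) (θ : ℝ) (u : Fin K → ℝ) :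
    ∏ i, gTheta θ (u i) =
      Real.exp (θ * Real.sqrt K * ((∑ i, stdNormalQuantile (u i)) / Real.sqrt K) -
        K * (θ ^ 2 / 2)) := by
  have hsqrt : Real.sqrt K ≠ 0 := by positivity
  simp_rw [gTheta_eq_exp]
  rw [← Real.exp_sum, Finset.sum_sub_distrib, ← Finset.mul_sum, Finset.sum_const,
    Finset.card_univ, Fintype.card_fin, nsmul_eq_mul, mul_assoc θ, mul_div_cancel₀ _ hsqrt]

end GaussianPValues

/-- The region `A*` rejecting when `Σ_i Φ⁻¹(u_i)/√K < z_α` has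
Lebesgue measure `α` in `[0,1]^K`, and among all measurable `A ⊆ [0,1]^K` of measure at
most `α` it maximizes `∫_A Π_i g_θ(u_i) du`, i.e. the rejection probability when all `K`
p-values are independent with density `g_θ`. -/
theorem globalRejectRegion_measure_and_NP_optimality
    (K : ℕ) (hK : 1 ≤ K) (α θ : ℝ) (hα : α ∈ Set.Ioo (0 : ℝ) 1) (hθ : θ < 0) :
    volume (globalRejectRegion K α) = ENNReal.ofReal α ∧
    ∀ A : Set (Fin K → ℝ), MeasurableSet A → A ⊆ unitCube K →
      volume A ≤ ENNReal.ofReal α →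
      (∫ u in A, ∏ i, gTheta θ (u i)) ≤
        ∫ u in globalRejectRegion K α, ∏ i, gTheta θ (u i) := by
  have hvol := volume_globalRejectRegion hK hα
  refine ⟨hvol, fun A hA hAC hAα => ?_⟩
  set h : ℝ → ℝ := fun s => Real.exp (θ * Real.sqrt K * s - K * (θ ^ 2 / 2))
  have hslope : θ * Real.sqrt K ≤ 0 := mul_nonpos_of_nonpos_of_nonneg hθ.le (Real.sqrt_nonneg K)
  have hh : Antitone h := fun _ _ hss' =>
    Real.exp_le_exp.2 (by linarith [mul_le_mul_of_nonpos_left hss' hslope])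
  have hprod : (fun u : Fin K → ℝ => ∏ i, gTheta θ (u i)) =
      fun u => h ((∑ i, stdNormalQuantile (u i)) / Real.sqrt K) :=
    funext (prod_gTheta_eq_exp hK θ)
  rw [hprod]
  exact setIntegral_antitone_comp_le_lowerTail hh (Real.exp_pos _).le hA
    (measurableSet_globalRejectRegion α) hAC (hprod ▸ integrableOn_prod_gTheta θ)
    (hvol ▸ ENNReal.ofReal_ne_top) (hAα.trans_eq hvol.symm)

end
end
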